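/- arXiv:1911.08369 — 5 statements merged into one kernel-verified Lean document; each statement's English description precedes it below -/
import Mathlib

section
/- Let 0 < p ≤ q ≤ ∞, b < −1/q (b ≤ 0 if q = ∞), and let (A_j), (B_j) be sequences of quasi-Banach spaces with B_j ↪ A_j uniformly in j. Then ℓ_p((A_j, B_j)_{(1,b),q}) is continuously embedded in (ℓ_p(A_j), ℓ_p(B_j))_{(1,b),q}; that is, for a = (a_j), the inequality (∫₀¹ (t^{−1}(1−log t)^b (∑_j K_p(t, a_j; A_j, B_j)^p)^{1/p})^q dt/t)^{1/q} ≲ (∑_j ‖a_j‖_{(A_j,B_j)_{(1,b),q}}^p)^{1/p} holds. -/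
/-!
Since `K_p ≤ 2^{1/p} K`, it suffices to bound the `ℓ_p`-sum of the ordinary `K`-functionals.
With respect to the measure `dt/t` on `(0, 1)` and the weight `w(t) = t⁻¹(1 - log t)^b`, the
left-hand side is then `‖‖(w K(·, a_j))_j‖_{ℓ_p}‖_{L_q}` and the right-hand side is
`‖(‖w K(·, a_j)‖_{L_q})_j‖_{ℓ_p}`. Because `q ≥ p`, the two norms can be exchanged: this is the
triangle inequality for the series `∑_j (w K(·, a_j))^p` in `L_{q/p}`.
-/

open MeasureTheory
open scoped ENNReal

/-- The Peetre K-functional for a couple modelled as an ambient group `A` with two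
quasi-norms and the second space given by the additive subgroup `S`. -/
noncomputable def Kfunctional {A : Type*} [AddCommGroup A]
    (N0 N1 : A → ℝ≥0∞) (S : AddSubgroup A) (t : ℝ) (a : A) : ℝ≥0∞ :=
  ⨅ a1 : S, (N0 (a - (a1 : A)) + ENNReal.ofReal t * N1 (a1 : A))

/-- The `K_p`-functional
`K_p(t, a) = inf_{a₁ ∈ S} (N0(a − a₁)^p + t^p N1(a₁)^p)^{1/p}`. -/
noncomputable def KpFunctional (p : ℝ) {A : Type*} [AddCommGroup A]
    (N0 N1 : A → ℝ≥0∞) (S : AddSubgroup A) (t : ℝ) (a : A) : ℝ≥0∞ :=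
  ⨅ a1 : S, ((N0 (a - (a1 : A))) ^ p + (ENNReal.ofReal t) ^ p * (N1 (a1 : A)) ^ p) ^ (1/p)

/-- The quasi-norm of the limiting interpolation space `(A₀, A₁)_{(1,b),q}`:
`(∫₀¹ (t^{−1}(1 + |log t|)^b K(t,a))^q dt/t)^{1/q}`. -/
noncomputable def limInterpNorm {A : Type*} [AddCommGroup A]
    (N0 N1 : A → ℝ≥0∞) (S : AddSubgroup A) (b q : ℝ) (a : A) : ℝ≥0∞ :=
  (∫⁻ t in Set.Ioo (0:ℝ) 1,
    (ENNReal.ofReal (t⁻¹ * (1 - Real.log t) ^ b) * Kfunctional N0 N1 S t a) ^ q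
      * ENNReal.ofReal (t⁻¹)) ^ (1/q)

open Set

namespace ENNReal

theorem iSup_rpow {ι : Sort*} (x : ι → ℝ≥0∞) {r : ℝ} (hr : 0 < r) :
    (⨆ i, x i) ^ r = ⨆ i, x i ^ r :=
  (orderIsoRpow r hr).map_iSup x

theorem rpow_add_rpow_le_two_mul_add_rpow (x y : ℝ≥0∞) {p : ℝ} (hp : 0 ≤ p) :
    x ^ p + y ^ p ≤ 2 * (x + y) ^ p := by
  rw [two_mul]
  exact add_le_add (rpow_le_rpow le_self_add hp) (rpow_le_rpow le_add_self hp)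

theorem tsum_const_mul_rpow_rpow_one_div {ι : Type*} (c : ℝ≥0∞) (x : ι → ℝ≥0∞) {p : ℝ}
    (hp : 0 < p) : (∑' i, (c * x i) ^ p) ^ (1 / p) = c * (∑' i, x i ^ p) ^ (1 / p) := by
  simp_rw [mul_rpow_of_nonneg _ _ hp.le]
  rw [ENNReal.tsum_mul_left, mul_rpow_of_nonneg _ _ (one_div_pos.2 hp).le, ← rpow_mul,
    mul_one_div_cancel hp.ne', rpow_one]

end ENNReal

namespace MeasureTheory

variable {α : Type*} [MeasurableSpace α] {μ : Measure α}

theorem eLpNorm'_const_mul {f : α → ℝ≥0∞} {c : ℝ≥0∞} (hc : c ≠ ⊤) {q : ℝ} (hq : 0 < q) :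
    eLpNorm' (fun a => c * f a) q μ = c * eLpNorm' f q μ := by
  simp only [eLpNorm', enorm_eq_self, ENNReal.mul_rpow_of_nonneg _ _ hq.le]
  rw [lintegral_const_mul' _ _ (ENNReal.rpow_ne_top_of_nonneg hq.le hc),
    ENNReal.mul_rpow_of_nonneg _ _ (one_div_pos.2 hq).le, ← ENNReal.rpow_mul,
    mul_one_div_cancel hq.ne', ENNReal.rpow_one]

theorem eLpNorm'_tsum_le {ι : Type*} [Countable ι] {f : ι → α → ℝ≥0∞}
    (hf : ∀ i, AEMeasurable (f i) μ) {r : ℝ} (hr : 1 ≤ r) :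
    eLpNorm' (fun a => ∑' i, f i a) r μ ≤ ∑' i, eLpNorm' (f i) r μ := by
  have hr0 : 0 < r := one_pos.trans_le hr
  have hmono : Monotone fun (s : Finset ι) a => (∑ i ∈ s, f i a) ^ r := fun s t hst a =>
    ENNReal.rpow_le_rpow (Finset.sum_le_sum_of_subset hst) hr0.le
  have hsup : eLpNorm' (fun a => ∑' i, f i a) r μ
      = ⨆ s : Finset ι, eLpNorm' (∑ i ∈ s, f i) r μ := by
    simp only [eLpNorm', enorm_eq_self, ENNReal.tsum_eq_iSup_sum, ENNReal.iSup_rpow _ hr0,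
      Finset.sum_apply]
    rw [lintegral_iSup_directed (fun s => ?_) hmono.directed_le,
      ENNReal.iSup_rpow _ (one_div_pos.2 hr0)]
    exact (Finset.aemeasurable_fun_sum _ fun i _ => hf i).pow_const r
  rw [hsup]
  exact iSup_le fun s => (eLpNorm'_sum_le (fun i _ => (hf i).aestronglyMeasurable) hr).trans
    (ENNReal.sum_le_tsum s)

theorem eLpNorm'_restrict_withDensity {f : α → ℝ≥0∞} (hf : Measurable f) (hf_lt : ∀ a, f a < ⊤)
    {s : Set α} (hs : MeasurableSet s) (F : α → ℝ≥0∞) (q : ℝ) :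
    eLpNorm' F q ((μ.withDensity f).restrict s) = (∫⁻ a in s, F a ^ q * f a ∂μ) ^ (1 / q) := by
  rw [eLpNorm', setLIntegral_withDensity_eq_setLIntegral_mul_non_measurable _ hf _ hs
    (ae_of_all _ hf_lt)]
  simp only [enorm_eq_self, Pi.mul_apply, mul_comm]

/-- Minkowski's mixed-norm inequality `‖‖g‖_{ℓ_p}‖_{L_q} ≤ ‖‖g‖_{L_q}‖_{ℓ_p}` for `p ≤ q`. -/
theorem eLpNorm'_tsum_rpow_rpow_le {ι : Type*} [Countable ι] {g : ι → α → ℝ≥0∞}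
    (hg : ∀ i, AEMeasurable (g i) μ) {p q : ℝ} (hp : 0 < p) (hpq : p ≤ q) :
    eLpNorm' (fun a => (∑' i, g i a ^ p) ^ (1 / p)) q μ
      ≤ (∑' i, eLpNorm' (g i) q μ ^ p) ^ (1 / p) := by
  have hrpow : ∀ (f : α → ℝ≥0∞) (r s : ℝ), 0 < s →
      eLpNorm' (fun a => f a ^ s) r μ = eLpNorm' f (r * s) μ ^ s :=
    fun f r s hs => eLpNorm'_enorm_rpow f r s hs
  rw [hrpow _ _ _ (one_div_pos.2 hp)]
  gcongr
  calc eLpNorm' (fun a => ∑' i, g i a ^ p) (q * (1 / p)) μ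
      ≤ ∑' i, eLpNorm' (fun a => g i a ^ p) (q * (1 / p)) μ :=
        eLpNorm'_tsum_le (fun i => (hg i).pow_const p) (by rwa [mul_one_div, one_le_div hp])
    _ = ∑' i, eLpNorm' (g i) q μ ^ p := by
        simp_rw [hrpow _ _ _ hp, one_div, inv_mul_cancel_right₀ hp.ne']

end MeasureTheory

section KFunctional

variable {A : Type*} [AddCommGroup A] (N0 N1 : A → ℝ≥0∞) (S : AddSubgroup A)

theorem Kfunctional_mono (a : A) : Monotone fun t => Kfunctional N0 N1 S t a :=
  fun _ _ hst => iInf_mono fun _ => by gcongr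

theorem KpFunctional_le_two_rpow_mul_Kfunctional {p : ℝ} (hp : 0 < p) (t : ℝ) (a : A) :
    KpFunctional p N0 N1 S t a ≤ 2 ^ (1 / p) * Kfunctional N0 N1 S t a := by
  rw [Kfunctional, ENNReal.mul_iInf_of_ne (by positivity)
    (ENNReal.rpow_ne_top_of_nonneg (by positivity) ENNReal.ofNat_ne_top)]
  refine iInf_mono fun a1 => ?_
  calc (N0 (a - a1) ^ p + ENNReal.ofReal t ^ p * N1 a1 ^ p) ^ (1 / p)
      = (N0 (a - a1) ^ p + (ENNReal.ofReal t * N1 a1) ^ p) ^ (1 / p) := by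
        rw [ENNReal.mul_rpow_of_nonneg _ _ hp.le]
    _ ≤ (2 * (N0 (a - a1) + ENNReal.ofReal t * N1 a1) ^ p) ^ (1 / p) := by
        gcongr
        exact ENNReal.rpow_add_rpow_le_two_mul_add_rpow _ _ hp.le
    _ = 2 ^ (1 / p) * (N0 (a - a1) + ENNReal.ofReal t * N1 a1) := by
        rw [ENNReal.mul_rpow_of_nonneg _ _ (one_div_pos.2 hp).le, ← ENNReal.rpow_mul,
          mul_one_div_cancel hp.ne', ENNReal.rpow_one]

theorem mul_tsum_KpFunctional_rpow_le {ι : Type*} {A : ι → Type*} [∀ j, AddCommGroup (A j)]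
    (N0 N1 : ∀ j, A j → ℝ≥0∞) (S : ∀ j, AddSubgroup (A j)) {p : ℝ} (hp : 0 < p) (w : ℝ≥0∞)
    (t : ℝ) (a : ∀ j, A j) :
    w * (∑' j, KpFunctional p (N0 j) (N1 j) (S j) t (a j) ^ p) ^ (1 / p)
      ≤ 2 ^ (1 / p) * (∑' j, (w * Kfunctional (N0 j) (N1 j) (S j) t (a j)) ^ p) ^ (1 / p) :=
  calc w * (∑' j, KpFunctional p (N0 j) (N1 j) (S j) t (a j) ^ p) ^ (1 / p)
      ≤ w * (∑' j, (2 ^ (1 / p) * Kfunctional (N0 j) (N1 j) (S j) t (a j)) ^ p) ^ (1 / p) := by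
        gcongr with j
        exact KpFunctional_le_two_rpow_mul_Kfunctional _ _ _ hp _ _
    _ = 2 ^ (1 / p) * (∑' j, (w * Kfunctional (N0 j) (N1 j) (S j) t (a j)) ^ p) ^ (1 / p) := by
        rw [ENNReal.tsum_const_mul_rpow_rpow_one_div _ _ hp,
          ENNReal.tsum_const_mul_rpow_rpow_one_div _ _ hp, mul_left_comm]

end KFunctional

theorem ellp_embedding_into_limiting_interpolation_general
    (p q b : ℝ) (hp : 0 < p) (hpq : p ≤ q)
    {A : ℕ → Type*} [∀ j, AddCommGroup (A j)]
    (N0 N1 : ∀ j, A j → ℝ≥0∞) (S : ∀ j, AddSubgroup (A j)) :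
    ∃ C : ℝ≥0∞, C ≠ ⊤ ∧ ∀ a : ∀ j, A j,
      (∫⁻ t in Set.Ioo (0:ℝ) 1,
        (ENNReal.ofReal (t⁻¹ * (1 - Real.log t) ^ b) *
          (∑' j, (KpFunctional p (N0 j) (N1 j) (S j) t (a j)) ^ p) ^ (1/p)) ^ q
          * ENNReal.ofReal (t⁻¹)) ^ (1/q)
      ≤ C * (∑' j, (limInterpNorm (N0 j) (N1 j) (S j) b q (a j)) ^ p) ^ (1/p) := by
  have hq : 0 < q := hp.trans_le hpq
  have h2 : (2 : ℝ≥0∞) ^ (1 / p) ≠ ⊤ :=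
    ENNReal.rpow_ne_top_of_nonneg (one_div_pos.2 hp).le ENNReal.ofNat_ne_top
  refine ⟨2 ^ (1 / p), h2, fun a => ?_⟩
  set μ := (volume.withDensity fun t : ℝ => ENNReal.ofReal t⁻¹).restrict (Ioo 0 1)
  set w := fun t : ℝ => ENNReal.ofReal (t⁻¹ * (1 - Real.log t) ^ b)
  set K := fun j t => Kfunctional (N0 j) (N1 j) (S j) t (a j)
  have hwK (j : ℕ) : AEMeasurable (fun t => w t * K j t) μ :=
    ((by fun_prop : Measurable w).mul (Kfunctional_mono _ _ _ _).measurable).aemeasurable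
  have hμ (F : ℝ → ℝ≥0∞) :
      eLpNorm' F q μ = (∫⁻ t in Ioo 0 1, F t ^ q * ENNReal.ofReal t⁻¹) ^ (1 / q) :=
    eLpNorm'_restrict_withDensity measurable_inv.ennreal_ofReal (fun _ => ENNReal.ofReal_lt_top)
      measurableSet_Ioo F q
  calc _ = eLpNorm' (fun t => w t * (∑' j, KpFunctional p (N0 j) (N1 j) (S j) t (a j) ^ p)
          ^ (1 / p)) q μ := (hμ _).symm
    _ ≤ eLpNorm' (fun t => 2 ^ (1 / p) * (∑' j, (w t * K j t) ^ p) ^ (1 / p)) q μ :=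
        eLpNorm'_mono_enorm_ae hq.le
          (ae_of_all _ fun t => mul_tsum_KpFunctional_rpow_le N0 N1 S hp (w t) t a)
    _ = 2 ^ (1 / p) * eLpNorm' (fun t => (∑' j, (w t * K j t) ^ p) ^ (1 / p)) q μ :=
        eLpNorm'_const_mul h2 hq
    _ ≤ 2 ^ (1 / p) * (∑' j, eLpNorm' (fun t => w t * K j t) q μ ^ p) ^ (1 / p) := by
        gcongr
        exact eLpNorm'_tsum_rpow_rpow_le hwK hp hpq
    _ = _ := by simp only [limInterpNorm, hμ]; rfl

/-- for `0 < p ≤ q`, `b < −1/q` and sequences of quasi-Banach couples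
`(A_j, B_j)` with `B_j ↪ A_j` uniformly in `j`, one has
`ℓ_p((A_j, B_j)_{(1,b),q}) ↪ (ℓ_p(A_j), ℓ_p(B_j))_{(1,b),q}`, i.e.
`(∫₀¹ (t^{−1}(1−log t)^b (∑_j K_p(t, a_j)^p)^{1/p})^q dt/t)^{1/q}
  ≲ (∑_j ‖a_j‖_{(A_j,B_j)_{(1,b),q}}^p)^{1/p}`. -/
theorem ellp_embedding_into_limiting_interpolation
    (p q b : ℝ) (hp : 0 < p) (hpq : p ≤ q) (hb : b < -(1/q))
    {A : ℕ → Type*} [∀ j, AddCommGroup (A j)]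
    (N0 N1 : ∀ j, A j → ℝ≥0∞) (S : ∀ j, AddSubgroup (A j))
    (cEmb : ℝ≥0∞) (hcEmb : cEmb ≠ ⊤)
    (hEmb : ∀ j, ∀ x ∈ S j, N0 j x ≤ cEmb * N1 j x) :
    ∃ C : ℝ≥0∞, C ≠ ⊤ ∧ ∀ a : ∀ j, A j,
      (∫⁻ t in Set.Ioo (0:ℝ) 1,
        (ENNReal.ofReal (t⁻¹ * (1 - Real.log t) ^ b) *
          (∑' j, (KpFunctional p (N0 j) (N1 j) (S j) t (a j)) ^ p) ^ (1/p)) ^ q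
          * ENNReal.ofReal (t⁻¹)) ^ (1/q)
      ≤ C * (∑' j, (limInterpNorm (N0 j) (N1 j) (S j) b q (a j)) ^ p) ^ (1/p) :=
  ellp_embedding_into_limiting_interpolation_general p q b hp hpq N0 N1 S
end

section
/- Let (λ_n), (γ_n) be non-negative sequences, 0 < u < v ≤ 1, 1/w = 1/u − 1/v, and Γ_n = ∑_{k=1}^n γ_k. If λ_n = (1+log n)^{−bq} n^{−1} and γ_n = (1+log n)^{(−b+1/q)r} n^{r/p−1} with q < r < p and b > 1/q, u = q/p, v = r/p, then ∑_{n=1}^∞ λ_n (∑_{k=n}^∞ λ_k)^{w/v} max_{k ≤ n}(k^v/Γ_k)^{w/v} = ∑_{n=1}^∞ 1/((1+log n)·n) = ∞ up to equivalence; in particular this sum diverges. Consequently, by the Bennett–Grosse-Erdmann criterion, the inequality (∑_n λ_n (∑_{k=1}^n a_k)^u)^{1/u} ≲ (∑_n γ_n a_n^v)^{1/v} fails for some non-negative non-increasing sequence (a_n). -/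
open scoped ENNReal

/-- The weight `λ_n = (1+log n)^{−bq} n^{−1}`. -/
noncomputable def lamSeq (b q : ℝ) (n : ℕ) : ℝ≥0∞ :=
  ENNReal.ofReal ((1 + Real.log (n:ℝ)) ^ (-(b*q))) * ((n:ℝ≥0∞))⁻¹

/-- The weight `γ_n = (1+log n)^{(−b+1/q)r} n^{r/p−1}`. -/
noncomputable def gamSeq (b q r p : ℝ) (n : ℕ) : ℝ≥0∞ :=
  ENNReal.ofReal ((1 + Real.log (n:ℝ)) ^ ((-b + 1/q)*r)) * ((n:ℝ≥0∞)) ^ (r/p - 1)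

/-- `Γ_n = ∑_{k=1}^n γ_k`. -/
noncomputable def GamSum (b q r p : ℝ) (n : ℕ) : ℝ≥0∞ :=
  ∑ k ∈ Finset.Icc 1 n, gamSeq b q r p k

/-!
Write `L n = 1 + log n`. Comparing the sum with `∫ L^{-β}/x = L^{1-β}/(1-β)` shows that the
tail `∑_{k ≥ n} λ_k` is `≳ L(n)^{1-bq}`, already on the block `[n, 3n²)`, where `L` doubles.
Since `L` grows slower than any power, `Γ_n ≲ n^{r/p} L(n)^{-(b-1/q)r}`. Hence the `n`-th term
of the Bennett–Grosse-Erdmann series is `≳ 1/(n L(n))`, and `∑ 1/(n L(n))` diverges like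
`log L(N)`.

The inequality itself fails for the step sequence `a_k = sup_j (τ_j / m_j) 𝟙[k ≤ m_j]` with
`m_{j+1} = 3 m_j²`. On the block `[m_j, m_{j+1})` the left side gains `≳ τ_j^{q/p} L(m_j)^{1-bq}`;
the `j`-th step costs the right side `≲ τ_j^{r/p} L(m_j)^{-(b-1/q)r}`. Taking
`τ_j^{q/p} = L(m_j)^{bq-1}/(j+1)` turns these into `1/(j+1)` and `(j+1)^{-r/q}`: as `r > q`, the
left side is infinite and the right side finite.
-/

open Real Finset Filter

lemma one_add_log_natCast_pos (n : ℕ) : 0 < 1 + log (n : ℝ) := by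
  linarith [log_natCast_nonneg n]

lemma one_add_log_mul_le {x t : ℝ} (hx : 1 ≤ x) (ht : 1 ≤ t) :
    1 + log (x * t) ≤ (1 + log x) * (1 + log t) := by
  rw [log_mul (by positivity) (by positivity)]
  nlinarith [log_nonneg hx, log_nonneg ht]

lemma one_add_log_rpow_le {t d ε : ℝ} (ht : 1 ≤ t) (hd : 0 < d) (hε : 0 < ε) :
    (1 + log t) ^ d ≤ (1 + d / ε) ^ d * t ^ ε := by
  have hlog : log t ≤ t ^ (ε / d) / (ε / d) := log_le_rpow_div (by linarith) (by positivity)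
  have hone : 1 ≤ t ^ (ε / d) := one_le_rpow ht (by positivity)
  have hbase : 1 + log t ≤ (1 + d / ε) * t ^ (ε / d) := by
    rw [div_div_eq_mul_div, mul_div_assoc] at hlog
    nlinarith [div_mul_eq_mul_div d ε (t ^ (ε / d))]
  calc (1 + log t) ^ d ≤ ((1 + d / ε) * t ^ (ε / d)) ^ d :=
        rpow_le_rpow (by linarith [log_nonneg ht]) hbase hd.le
    _ = (1 + d / ε) ^ d * t ^ ε := by
        rw [mul_rpow (by positivity) (by positivity), ← rpow_mul (by linarith),
          div_mul_cancel₀ _ hd.ne']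

lemma one_add_log_rpow_le_of_le {x y d ε : ℝ} (hx : 1 ≤ x) (hxy : x ≤ y) (hd : 0 < d)
    (hε : 0 < ε) : (1 + log y) ^ d ≤ (1 + d / ε) ^ d * (y / x) ^ ε * (1 + log x) ^ d := by
  have hyx : 1 ≤ y / x := by rwa [one_le_div (by linarith)]
  have hlogx : 0 ≤ 1 + log x := by linarith [log_nonneg hx]
  have hy : y = x * (y / x) := by rw [mul_div_cancel₀ _ (by positivity)]
  calc (1 + log y) ^ d ≤ ((1 + log x) * (1 + log (y / x))) ^ d := by
        refine rpow_le_rpow (by linarith [log_nonneg (hx.trans hxy)]) ?_ hd.le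
        nth_rewrite 1 [hy]
        exact one_add_log_mul_le hx hyx
    _ = (1 + log x) ^ d * (1 + log (y / x)) ^ d := mul_rpow hlogx (by linarith [log_nonneg hyx])
    _ ≤ (1 + log x) ^ d * ((1 + d / ε) ^ d * (y / x) ^ ε) := by
        gcongr
        exact one_add_log_rpow_le hyx hd hε
    _ = _ := by ring

lemma sub_le_sum_Ico_of_hasDerivAt {F f : ℝ → ℝ} {a b : ℕ} (hab : a ≤ b)
    (hF : ∀ x ∈ Set.Icc (a : ℝ) b, HasDerivAt F (f x) x) (hf : AntitoneOn f (Set.Icc a b)) :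
    F b - F a ≤ ∑ k ∈ Ico a b, f k := by
  have hab' : (a : ℝ) ≤ b := by exact_mod_cast hab
  rw [← intervalIntegral.integral_eq_sub_of_hasDerivAt (by rwa [Set.uIcc_of_le hab'])
    (AntitoneOn.intervalIntegrable (by rwa [Set.uIcc_of_le hab']))]
  exact hf.integral_le_sum_Ico hab

lemma antitoneOn_one_add_log_rpow_neg_div {β : ℝ} (hβ : 0 ≤ β) :
    AntitoneOn (fun x => (1 + log x) ^ (-β) / x) (Set.Ici 1) := by
  intro x hx y _ hxy
  have hx : (1 : ℝ) ≤ x := hx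
  have hlog : 0 < 1 + log x := by linarith [log_nonneg hx]
  have hlogxy : 1 + log x ≤ 1 + log y := by gcongr
  exact div_le_div₀ (by positivity) (rpow_le_rpow_of_nonpos hlog hlogxy (by linarith))
    (by linarith) hxy

lemma hasDerivAt_one_add_log_rpow {x : ℝ} (hx : 1 ≤ x) (t : ℝ) :
    HasDerivAt (fun y => (1 + log y) ^ t) (t * (1 + log x) ^ (t - 1) / x) x := by
  refine (((hasDerivAt_log (by positivity)).const_add 1).rpow_const
    (Or.inl (by linarith [log_nonneg hx]))).congr_deriv ?_
  field_simp

lemma le_sum_Ico_one_add_log_rpow_neg_div {β : ℝ} (hβ0 : 0 ≤ β) (hβ1 : β ≠ 1) {a b : ℕ}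
    (ha : 1 ≤ a) (hab : a ≤ b) :
    ((1 + log a) ^ (1 - β) - (1 + log b) ^ (1 - β)) / (β - 1)
      ≤ ∑ k ∈ Ico a b, (1 + log k) ^ (-β) / k := by
  have ha' : (1 : ℝ) ≤ a := by exact_mod_cast ha
  refine le_of_eq_of_le ?_ (sub_le_sum_Ico_of_hasDerivAt
    (F := fun x => (1 + log x) ^ (1 - β) / (1 - β)) hab (fun x hx => ?_)
    ((antitoneOn_one_add_log_rpow_neg_div hβ0).mono fun x hx => ha'.trans hx.1))
  · rw [← neg_sub 1 β, div_neg]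
    ring
  · refine ((hasDerivAt_one_add_log_rpow (ha'.trans hx.1) (1 - β)).div_const
      (1 - β)).congr_deriv ?_
    have : (1 : ℝ) - β ≠ 0 := sub_ne_zero.mpr hβ1.symm
    rw [sub_sub_cancel_left]
    field_simp

noncomputable def tailConst (β : ℝ) : ℝ := (1 - 2 ^ (1 - β)) / (β - 1)

lemma tailConst_pos {β : ℝ} (hβ : 1 < β) : 0 < tailConst β := by
  have : (2 : ℝ) ^ (1 - β) < 1 := rpow_lt_one_of_one_lt_of_neg one_lt_two (by linarith)
  exact div_pos (by linarith) (by linarith)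

lemma le_sum_Ico_sq_one_add_log_rpow_neg_div {β : ℝ} (hβ : 1 < β) {n : ℕ} (hn : 1 ≤ n) :
    tailConst β * (1 + log n) ^ (1 - β)
      ≤ ∑ k ∈ Ico n (3 * n ^ 2), (1 + log k) ^ (-β) / k := by
  have hlog3 : 1 < log 3 := by
    rw [lt_log_iff_exp_lt (by norm_num)]
    linarith [exp_one_lt_d9]
  have hdouble : 2 * (1 + log (n : ℝ)) ≤ 1 + log ((3 * n ^ 2 : ℕ) : ℝ) := by
    push_cast
    rw [log_mul (by norm_num) (by positivity), log_pow]
    push_cast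
    linarith
  have hfar :
      (1 + log ((3 * n ^ 2 : ℕ) : ℝ)) ^ (1 - β) ≤ 2 ^ (1 - β) * (1 + log n) ^ (1 - β) := by
    rw [← mul_rpow (by norm_num) (one_add_log_natCast_pos n).le]
    exact rpow_le_rpow_of_nonpos (by linarith [one_add_log_natCast_pos n]) hdouble (by linarith)
  calc tailConst β * (1 + log n) ^ (1 - β)
      = ((1 + log n) ^ (1 - β) - 2 ^ (1 - β) * (1 + log n) ^ (1 - β)) / (β - 1) := by
        rw [tailConst]; ring
    _ ≤ ((1 + log n) ^ (1 - β) - (1 + log ((3 * n ^ 2 : ℕ) : ℝ)) ^ (1 - β)) / (β - 1) :=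
        div_le_div_of_nonneg_right (by linarith) (by linarith)
    _ ≤ _ := le_sum_Ico_one_add_log_rpow_neg_div (by linarith) hβ.ne' hn (by nlinarith)

lemma not_summable_one_add_log_rpow_neg_one_div :
    ¬ Summable (fun n : ℕ => (1 + log n) ^ (-1 : ℝ) / n) := by
  rw [not_summable_iff_tendsto_nat_atTop_of_nonneg fun n => by
    have := one_add_log_natCast_pos n; positivity]
  have hlower (N : ℕ) (hN : 1 ≤ N) :
      log (1 + log N) ≤ ∑ k ∈ range N, (1 + log k) ^ (-1 : ℝ) / k := by
    have hsub := sub_le_sum_Ico_of_hasDerivAt (F := fun x => log (1 + log x)) hN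
      (fun x hx => ?_) ((antitoneOn_one_add_log_rpow_neg_div zero_le_one).mono
        fun x hx => by simpa using hx.1)
    · simp only [Nat.cast_one, log_one, add_zero, sub_zero] at hsub
      exact hsub.trans (sum_le_sum_of_subset_of_nonneg (fun k => by simp)
        fun k _ _ => by have := one_add_log_natCast_pos k; positivity)
    · have hx1 : (1 : ℝ) ≤ x := by simpa using hx.1
      refine (((hasDerivAt_log (by positivity)).const_add 1).log
        (by linarith [log_nonneg hx1])).congr_deriv ?_
      rw [rpow_neg_one]
      field_simp
  refine tendsto_atTop_mono' atTop (eventually_atTop.mpr ⟨1, hlower⟩) ?_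
  exact tendsto_log_atTop.comp ((tendsto_atTop_add_const_left _ 1 tendsto_log_atTop).comp
    tendsto_natCast_atTop_atTop)

lemma mul_rpow_sub_one_le_rpow_sub {s x : ℝ} (hs0 : 0 ≤ s) (hs1 : s ≤ 1) (hx : 1 ≤ x) :
    s * x ^ (s - 1) ≤ x ^ s - (x - 1) ^ s := by
  have hx0 : 0 < x := by linarith
  have hbern := rpow_one_add_le_one_add_mul_self (s := -x⁻¹)
    (by linarith [inv_le_one_of_one_le₀ hx]) hs0 hs1
  have hbase : 1 + -x⁻¹ = (x - 1) / x := by field_simp; ring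
  rw [hbase, div_rpow (by linarith) hx0.le, div_le_iff₀ (by positivity)] at hbern
  rw [rpow_sub_one hx0.ne']
  have : (1 + s * -x⁻¹) * x ^ s = x ^ s - s * (x ^ s / x) := by ring
  linarith

lemma sum_Icc_rpow_sub_one_le {s : ℝ} (hs0 : 0 < s) (hs1 : s ≤ 1) (n : ℕ) :
    ∑ k ∈ Icc 1 n, (k : ℝ) ^ (s - 1) ≤ n ^ s / s := by
  induction n with
  | zero => simp [zero_rpow hs0.ne']
  | succ n ih =>
    rw [sum_Icc_succ_top (by omega), le_div_iff₀ hs0]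
    have hstep := mul_rpow_sub_one_le_rpow_sub hs0.le hs1
      (by exact_mod_cast Nat.le_add_left 1 n : (1 : ℝ) ≤ (n + 1 : ℕ))
    rw [le_div_iff₀ hs0] at ih
    push_cast at hstep ⊢
    rw [add_sub_cancel_right] at hstep
    nlinarith

lemma rpow_mul_one_add_log_rpow_neg_le {v d x y : ℝ} (hv : 0 < v) (hd : 0 < d) (hx : 1 ≤ x)
    (hxy : x ≤ y) :
    x ^ (v - 1) * (1 + log x) ^ (-d)
      ≤ (1 + 2 * d / v) ^ d * (y ^ (v / 2) * (1 + log y) ^ (-d)) * x ^ (v / 2 - 1) := by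
  have hx0 : 0 < x := by positivity
  have hLx : 0 < 1 + log x := by linarith [log_nonneg hx]
  have hLy : 0 < 1 + log y := by linarith [log_nonneg (hx.trans hxy)]
  have h := one_add_log_rpow_le_of_le hx hxy hd (by positivity : 0 < v / 2)
  rw [show d / (v / 2) = 2 * d / v by ring] at h
  have hcancel (L : ℝ) (hL : 0 < L) : L ^ d * L ^ (-d) = 1 := by
    rw [rpow_neg hL.le, mul_inv_cancel₀ (by positivity)]
  have hpow : (y / x) ^ (v / 2) * x ^ (v - 1) = y ^ (v / 2) * x ^ (v / 2 - 1) := by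
    rw [div_rpow (by linarith) hx0.le, show v / 2 - 1 = (v - 1) - v / 2 by ring,
      rpow_sub hx0 (v - 1)]
    ring
  calc x ^ (v - 1) * (1 + log x) ^ (-d)
      = x ^ (v - 1) * (1 + log x) ^ (-d) * ((1 + log y) ^ d * (1 + log y) ^ (-d)) := by
        rw [hcancel _ hLy, mul_one]
    _ ≤ x ^ (v - 1) * (1 + log x) ^ (-d)
          * ((1 + 2 * d / v) ^ d * (y / x) ^ (v / 2) * (1 + log x) ^ d * (1 + log y) ^ (-d)) := by
        gcongr
    _ = (1 + 2 * d / v) ^ d * ((y / x) ^ (v / 2) * x ^ (v - 1)) * (1 + log y) ^ (-d)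
          * ((1 + log x) ^ d * (1 + log x) ^ (-d)) := by ring
    _ = _ := by rw [hcancel _ hLx, hpow]; ring

lemma sum_Icc_rpow_mul_one_add_log_rpow_neg_le {v d : ℝ} (hv0 : 0 < v) (hv2 : v ≤ 2)
    (hd : 0 < d) (n : ℕ) :
    ∑ k ∈ Icc 1 n, (k : ℝ) ^ (v - 1) * (1 + log k) ^ (-d)
      ≤ 2 / v * (1 + 2 * d / v) ^ d * (n ^ v * (1 + log n) ^ (-d)) := by
  set A := (1 + 2 * d / v) ^ d
  calc ∑ k ∈ Icc 1 n, (k : ℝ) ^ (v - 1) * (1 + log k) ^ (-d)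
      ≤ ∑ k ∈ Icc 1 n, A * (n ^ (v / 2) * (1 + log n) ^ (-d)) * (k : ℝ) ^ (v / 2 - 1) :=
        sum_le_sum fun k hk => rpow_mul_one_add_log_rpow_neg_le hv0 hd
          (by exact_mod_cast (mem_Icc.mp hk).1) (by exact_mod_cast (mem_Icc.mp hk).2)
    _ ≤ A * (n ^ (v / 2) * (1 + log n) ^ (-d)) * (n ^ (v / 2) / (v / 2)) := by
        rw [← mul_sum]
        gcongr
        exact sum_Icc_rpow_sub_one_le (by positivity) (by linarith) n
    _ = 2 / v * A * (n ^ v * (1 + log n) ^ (-d)) := by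
        rw [← add_halves v, rpow_add' (Nat.cast_nonneg n) (by positivity), add_halves]
        field_simp

lemma tsum_ofReal_eq_top_of_not_summable {α : Type*} {f : α → ℝ} (hf : ∀ a, 0 ≤ f a)
    (h : ¬ Summable f) : ∑' a, ENNReal.ofReal (f a) = ⊤ := by
  by_contra hne
  exact h ((ENNReal.summable_toReal hne).congr fun a => ENNReal.toReal_ofReal (hf a))

lemma lamSeq_eq_ofReal (b q : ℝ) {n : ℕ} (hn : n ≠ 0) :
    lamSeq b q n = ENNReal.ofReal ((1 + log n) ^ (-(b * q)) / n) := by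
  rw [lamSeq, div_eq_mul_inv, ENNReal.ofReal_mul (rpow_nonneg (one_add_log_natCast_pos n).le _),
    ENNReal.ofReal_inv_of_pos (by positivity), ENNReal.ofReal_natCast]

lemma gamSeq_eq_ofReal (b q r p : ℝ) {n : ℕ} (hn : n ≠ 0) :
    gamSeq b q r p n
      = ENNReal.ofReal ((n : ℝ) ^ (r / p - 1) * (1 + log n) ^ ((-b + 1 / q) * r)) := by
  rw [gamSeq, mul_comm, ENNReal.ofReal_mul (by positivity), ← ENNReal.ofReal_natCast,
    ENNReal.ofReal_rpow_of_pos (by positivity)]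

lemma exists_GamSum_le {b q r p : ℝ} (hv0 : 0 < r / p) (hv2 : r / p ≤ 2)
    (hd : 0 < (b - 1 / q) * r) :
    ∃ C > 0, ∀ n : ℕ,
      GamSum b q r p n
        ≤ ENNReal.ofReal (C * (n ^ (r / p) * (1 + log n) ^ ((-b + 1 / q) * r))) := by
  refine ⟨2 / (r / p) * (1 + 2 * ((b - 1 / q) * r) / (r / p)) ^ ((b - 1 / q) * r), by positivity,
    fun n => ?_⟩
  rw [GamSum, sum_congr rfl fun k hk => gamSeq_eq_ofReal b q r p (by grind),
    ← ENNReal.ofReal_sum_of_nonneg fun k _ => by positivity,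
    show (-b + 1 / q) * r = -((b - 1 / q) * r) by ring]
  exact ENNReal.ofReal_le_ofReal (sum_Icc_rpow_mul_one_add_log_rpow_neg_le hv0 hv2 hd n)

lemma exists_GamSum_le_of_lt {p q r b : ℝ} (hq : 0 < q) (hqr : q < r) (hrp : r < p)
    (hb : 1 / q < b) :
    ∃ C > 0, ∀ n : ℕ,
      GamSum b q r p n
        ≤ ENNReal.ofReal (C * (n ^ (r / p) * (1 + log n) ^ ((-b + 1 / q) * r))) := by
  have hr : 0 < r := hq.trans hqr
  have hp : 0 < p := hr.trans hrp
  exact exists_GamSum_le (by positivity) (by rw [div_le_iff₀ hp]; linarith)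
    (mul_pos (sub_pos.mpr hb) hr)

lemma ofReal_le_sum_Ico_sq_lamSeq {b q : ℝ} (hbq : 1 < b * q) {n : ℕ} (hn : 1 ≤ n) :
    ENNReal.ofReal (tailConst (b * q) * (1 + log n) ^ (1 - b * q))
      ≤ ∑ k ∈ Ico n (3 * n ^ 2), lamSeq b q k := by
  rw [sum_congr rfl fun k hk => lamSeq_eq_ofReal b q (by grind),
    ← ENNReal.ofReal_sum_of_nonneg fun k _ => by have := one_add_log_natCast_pos k; positivity]
  exact ENNReal.ofReal_le_ofReal (le_sum_Ico_sq_one_add_log_rpow_neg_div hbq hn)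

noncomputable def lamTail (b q : ℝ) (n : ℕ) : ℝ≥0∞ :=
  ∑' k : ℕ, if n ≤ k then lamSeq b q k else 0

noncomputable def maxRatio (b q r p : ℝ) (n : ℕ) : ℝ≥0∞ :=
  ⨆ k ∈ Finset.Icc 1 n, (k : ℝ≥0∞) ^ (r / p) / GamSum b q r p k

lemma ofReal_le_lamTail {b q : ℝ} (hbq : 1 < b * q) {n : ℕ} (hn : 1 ≤ n) :
    ENNReal.ofReal (tailConst (b * q) * (1 + log n) ^ (1 - b * q))
      ≤ lamTail b q n := by
  refine (ofReal_le_sum_Ico_sq_lamSeq hbq hn).trans ?_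
  rw [← sum_congr rfl fun k hk => if_pos (mem_Ico.mp hk).1]
  exact ENNReal.sum_le_tsum _

lemma ofReal_le_maxRatio {b q r p C d : ℝ} (hC : 0 < C) {n : ℕ} (hn : 1 ≤ n)
    (hΓ : GamSum b q r p n ≤ ENNReal.ofReal (C * (n ^ (r / p) * (1 + log n) ^ (-d)))) :
    ENNReal.ofReal ((1 + log n) ^ d / C) ≤ maxRatio b q r p n := by
  refine le_trans ?_ (le_biSup (fun k : ℕ => (k : ℝ≥0∞) ^ (r / p) / GamSum b q r p k)
    (mem_Icc.mpr ⟨hn, le_rfl⟩))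
  have hn0 : (0 : ℝ) < n := by exact_mod_cast hn
  have hL := one_add_log_natCast_pos n
  calc ENNReal.ofReal ((1 + log n) ^ d / C)
      = ENNReal.ofReal (n ^ (r / p))
          / ENNReal.ofReal (C * (n ^ (r / p) * (1 + log n) ^ (-d))) := by
        rw [← ENNReal.ofReal_div_of_pos (by positivity), rpow_neg hL.le]
        congr 1
        field_simp
    _ ≤ (n : ℝ≥0∞) ^ (r / p) / GamSum b q r p n := by
        rw [← ENNReal.ofReal_natCast, ENNReal.ofReal_rpow_of_pos hn0]
        exact ENNReal.div_le_div_left hΓ _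

lemma BGE_exponent_eq {p q r b : ℝ} (hq : q ≠ 0) (hp : p ≠ 0) (hr : r ≠ 0)
    (hrq : r - q ≠ 0) :
    -(b * q) + (1 - b * q) * ((q * r) / (p * (r - q)) / (r / p))
      + -((-b + 1 / q) * r) * ((q * r) / (p * (r - q)) / (r / p)) = -1 := by
  field_simp
  ring

lemma BGE_term_eq {β d E c C L x : ℝ} (hc : 0 ≤ c) (hC : 0 ≤ C) (hL : 0 < L)
    (hE : -β + (1 - β) * E + d * E = -1) :
    L ^ (-β) / x * (c * L ^ (1 - β)) ^ E * (L ^ d / C) ^ E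
      = c ^ E / C ^ E * (L ^ (-1 : ℝ) / x) := by
  rw [mul_rpow hc (rpow_nonneg hL.le _), div_rpow (rpow_nonneg hL.le _) hC, ← rpow_mul hL.le,
    ← rpow_mul hL.le, ← hE, rpow_add hL, rpow_add hL]
  ring

theorem tsum_BGE_condition_eq_top {p q r b : ℝ} (hq : 0 < q) (hqr : q < r) (hrp : r < p)
    (hb : 1 / q < b) :
    (∑' n : ℕ, if 1 ≤ n then
        lamSeq b q n * lamTail b q n ^ ((q * r) / (p * (r - q)) / (r / p))
          * maxRatio b q r p n ^ ((q * r) / (p * (r - q)) / (r / p)) else 0) = ⊤ := by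
  set E := (q * r) / (p * (r - q)) / (r / p)
  have hr : 0 < r := hq.trans hqr
  have hp : 0 < p := hr.trans hrp
  have hbq : 1 < b * q := by rwa [div_lt_iff₀ hq] at hb
  have hE : 0 ≤ E := div_nonneg (div_nonneg (by positivity) (by nlinarith)) (by positivity)
  obtain ⟨C, hC, hΓ⟩ := exists_GamSum_le_of_lt hq hqr hrp hb
  set c := tailConst (b * q)
  have hc : 0 < c := tailConst_pos hbq
  have hterm (n : ℕ) : ENNReal.ofReal (c ^ E / C ^ E * ((1 + log n) ^ (-1 : ℝ) / n))
      ≤ if 1 ≤ n then lamSeq b q n * lamTail b q n ^ E * maxRatio b q r p n ^ E else 0 := by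
    split_ifs with hn
    · have hL := one_add_log_natCast_pos n
      rw [← BGE_term_eq hc.le hC.le hL
          (BGE_exponent_eq hq.ne' hp.ne' hr.ne' (sub_ne_zero.mpr hqr.ne')),
        ENNReal.ofReal_mul (by positivity), ENNReal.ofReal_mul (by positivity),
        ← ENNReal.ofReal_rpow_of_nonneg (by positivity) hE,
        ← ENNReal.ofReal_rpow_of_nonneg (by positivity) hE, ← lamSeq_eq_ofReal b q (by omega)]
      gcongr
      · exact ofReal_le_lamTail hbq hn
      · exact ofReal_le_maxRatio hC hn (by rw [neg_neg]; exact hΓ n)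
    · simp [show n = 0 by omega]
  refine top_le_iff.mp ((tsum_ofReal_eq_top_of_not_summable (fun n => by positivity) ?_).ge.trans
    (ENNReal.tsum_le_tsum hterm))
  rw [summable_mul_left_iff (by positivity)]
  exact not_summable_one_add_log_rpow_neg_one_div
noncomputable def stepSeq (m : ℕ → ℕ) (s : ℕ → ℝ≥0∞) (k : ℕ) : ℝ≥0∞ :=
  ⨆ j, if k ≤ m j then s j else 0

section stepSeq

variable (m : ℕ → ℕ) (s : ℕ → ℝ≥0∞)

lemma stepSeq_antitone : Antitone (stepSeq m s) := fun k l hkl =>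
  iSup_mono fun j => by split_ifs <;> first | exact le_rfl | exact zero_le | omega

variable {m s}

lemma le_stepSeq {k j : ℕ} (h : k ≤ m j) : s j ≤ stepSeq m s k :=
  le_iSup_of_le j (by rw [if_pos h])

lemma mul_le_sum_Icc_stepSeq {j n : ℕ} (h : m j ≤ n) :
    m j * s j ≤ ∑ k ∈ Icc 1 n, stepSeq m s k :=
  calc (m j : ℝ≥0∞) * s j = ∑ _k ∈ Icc 1 (m j), s j := by simp
    _ ≤ ∑ k ∈ Icc 1 (m j), stepSeq m s k :=
        sum_le_sum fun k hk => le_stepSeq (mem_Icc.mp hk).2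
    _ ≤ ∑ k ∈ Icc 1 n, stepSeq m s k := sum_le_sum_of_subset (Icc_subset_Icc_right h)

lemma stepSeq_rpow_le_tsum {v : ℝ} (hv : 0 < v) (k : ℕ) :
    stepSeq m s k ^ v ≤ ∑' j, (if k ≤ m j then s j ^ v else 0) := by
  rw [stepSeq, ← ENNReal.orderIsoRpow_apply v hv, (ENNReal.orderIsoRpow v hv).map_iSup]
  refine iSup_le fun j => le_trans (le_of_eq ?_) (ENNReal.le_tsum j)
  split_ifs <;> simp [ENNReal.zero_rpow_of_pos hv]

lemma tsum_mul_stepSeq_rpow_le (γ : ℕ → ℝ≥0∞) {v : ℝ} (hv : 0 < v) :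
    ∑' n, (if 1 ≤ n then γ n * stepSeq m s n ^ v else 0)
      ≤ ∑' j, s j ^ v * ∑ k ∈ Icc 1 (m j), γ k :=
  calc ∑' n, (if 1 ≤ n then γ n * stepSeq m s n ^ v else 0)
      ≤ ∑' n, ∑' j, (if n ∈ Icc 1 (m j) then s j ^ v * γ n else 0) := by
        refine ENNReal.tsum_le_tsum fun n => ?_
        split_ifs with hn
        · rw [mul_comm]
          refine (mul_le_mul_left (stepSeq_rpow_le_tsum hv n) _).trans_eq ?_
          rw [← ENNReal.tsum_mul_right]
          refine tsum_congr fun j => ?_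
          by_cases hj : n ≤ m j
          · rw [if_pos hj, if_pos (mem_Icc.mpr ⟨hn, hj⟩)]
          · rw [if_neg hj, if_neg fun h => hj (mem_Icc.mp h).2, zero_mul]
        · exact zero_le
    _ = ∑' j, s j ^ v * ∑ k ∈ Icc 1 (m j), γ k := by
        rw [ENNReal.tsum_comm]
        refine tsum_congr fun j => ?_
        rw [tsum_eq_sum (s := Icc 1 (m j)) fun n hn => if_neg hn, mul_sum]
        exact sum_congr rfl fun n hn => if_pos hn

end stepSeq

lemma tsum_sum_Ico_le_tsum (f : ℕ → ℝ≥0∞) {m : ℕ → ℕ} (hm : Monotone m) :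
    ∑' j, ∑ n ∈ Ico (m j) (m (j + 1)), f n ≤ ∑' n, f n := by
  refine ENNReal.tsum_le_of_sum_range_le fun J =>
    le_of_eq_of_le ?_ (ENNReal.sum_le_tsum (Ico (m 0) (m J)))
  induction J with
  | zero => simp
  | succ J ih => rw [sum_range_succ, ih, sum_Ico_consecutive f (hm J.zero_le) (hm J.le_succ)]

def blockScale : ℕ → ℕ
  | 0 => 1
  | j + 1 => 3 * blockScale j ^ 2

lemma one_le_blockScale (j : ℕ) : 1 ≤ blockScale j := by
  induction j with
  | zero => exact le_rfl
  | succ j ih => simp only [blockScale]; nlinarith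

lemma blockScale_monotone : Monotone blockScale :=
  monotone_nat_of_le_succ fun j => by simp only [blockScale]; nlinarith [one_le_blockScale j]

noncomputable def blockLevel (b q p : ℝ) (j : ℕ) : ℝ :=
  ((1 + log (blockScale j)) ^ (b * q - 1) / (j + 1)) ^ (p / q)

noncomputable def hardyTestSeq (b q p : ℝ) : ℕ → ℝ≥0∞ :=
  stepSeq blockScale fun j => ENNReal.ofReal (blockLevel b q p j / blockScale j)

lemma blockLevel_nonneg (b q p : ℝ) (j : ℕ) : 0 ≤ blockLevel b q p j := by
  have := one_add_log_natCast_pos (blockScale j)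
  unfold blockLevel
  positivity

lemma blockLevel_rpow (b q p : ℝ) (j : ℕ) (x : ℝ) :
    blockLevel b q p j ^ x
      = (1 + log (blockScale j)) ^ ((b * q - 1) * (p / q * x)) / ((j : ℝ) + 1) ^ (p / q * x) := by
  have := one_add_log_natCast_pos (blockScale j)
  rw [blockLevel, ← rpow_mul (by positivity), div_rpow (by positivity) (by positivity),
    ← rpow_mul this.le]

lemma ofReal_le_sum_block_hardyTestSeq {b q p : ℝ} (hq : 0 < q) (hp : 0 < p) (hbq : 1 < b * q)
    (j : ℕ) :
    ENNReal.ofReal (tailConst (b * q) * ((j : ℝ) + 1)⁻¹)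
      ≤ ∑ n ∈ Ico (blockScale j) (blockScale (j + 1)), (if 1 ≤ n then
          lamSeq b q n * (∑ k ∈ Icc 1 n, hardyTestSeq b q p k) ^ (q / p) else 0) := by
  set m := blockScale j
  have hm : 1 ≤ m := one_le_blockScale j
  have hL := one_add_log_natCast_pos m
  have hlevel : (m : ℝ≥0∞) * ENNReal.ofReal (blockLevel b q p j / m)
      = ENNReal.ofReal (blockLevel b q p j) := by
    rw [← ENNReal.ofReal_natCast, ← ENNReal.ofReal_mul (by positivity),
      mul_div_cancel₀ _ (by positivity)]
  calc ENNReal.ofReal (tailConst (b * q) * ((j : ℝ) + 1)⁻¹)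
      = ENNReal.ofReal (tailConst (b * q) * (1 + log m) ^ (1 - b * q))
          * ENNReal.ofReal (blockLevel b q p j) ^ (q / p) := by
        rw [ENNReal.ofReal_rpow_of_nonneg (blockLevel_nonneg b q p j) (by positivity),
          blockLevel_rpow,
          ← ENNReal.ofReal_mul (mul_nonneg (tailConst_pos hbq).le (rpow_nonneg hL.le _)),
          show p / q * (q / p) = 1 by field_simp, mul_one, rpow_one, mul_assoc, mul_div_assoc',
          ← rpow_add hL, sub_add_sub_cancel', sub_self, rpow_zero, one_div]
    _ ≤ (∑ n ∈ Ico m (blockScale (j + 1)), lamSeq b q n)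
          * (m * ENNReal.ofReal (blockLevel b q p j / m)) ^ (q / p) := by
        rw [hlevel]
        gcongr
        exact ofReal_le_sum_Ico_sq_lamSeq hbq hm
    _ ≤ _ := by
        rw [sum_mul]
        refine sum_le_sum fun n hn => ?_
        have hmn := (mem_Ico.mp hn).1
        rw [if_pos (hm.trans hmn)]
        gcongr
        exact mul_le_sum_Icc_stepSeq hmn

lemma tsum_lamSeq_mul_sum_hardyTestSeq_rpow_eq_top {b q p : ℝ} (hq : 0 < q) (hp : 0 < p)
    (hbq : 1 < b * q) :
    ∑' n : ℕ, (if 1 ≤ n then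
      lamSeq b q n * (∑ k ∈ Icc 1 n, hardyTestSeq b q p k) ^ (q / p) else 0) = ⊤ := by
  have hc := tailConst_pos hbq
  refine top_le_iff.mp (le_trans (le_of_eq ?_) ((ENNReal.tsum_le_tsum
    (ofReal_le_sum_block_hardyTestSeq hq hp hbq)).trans
    (tsum_sum_Ico_le_tsum _ blockScale_monotone)))
  refine (tsum_ofReal_eq_top_of_not_summable (fun j => by positivity) ?_).symm
  rw [summable_mul_left_iff hc.ne']
  exact_mod_cast (summable_nat_add_iff 1 (f := fun n : ℕ => (n : ℝ)⁻¹)).not.mpr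
    not_summable_natCast_inv

lemma ofReal_rpow_mul_GamSum_blockScale_le {b q r p C : ℝ} (hq : 0 < q) (hr : 0 < r) (hp : 0 < p)
    (hΓ : ∀ n : ℕ,
      GamSum b q r p n ≤ ENNReal.ofReal (C * (n ^ (r / p) * (1 + log n) ^ ((-b + 1 / q) * r))))
    (j : ℕ) :
    ENNReal.ofReal (blockLevel b q p j / blockScale j) ^ (r / p) * GamSum b q r p (blockScale j)
      ≤ ENNReal.ofReal (C * ((j + 1 : ℕ) ^ (r / q) : ℝ)⁻¹) := by
  set m := blockScale j
  have hm : (0 : ℝ) < m := by exact_mod_cast one_le_blockScale j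
  have hL := one_add_log_natCast_pos m
  have hσ := div_nonneg (blockLevel_nonneg b q p j) hm.le
  have hcancel :
      (1 + log (m : ℝ)) ^ ((b * q - 1) * (r / q)) * (1 + log (m : ℝ)) ^ ((-b + 1 / q) * r) = 1 := by
    rw [← rpow_add hL, show (b * q - 1) * (r / q) + (-b + 1 / q) * r = 0 by field_simp; ring,
      rpow_zero]
  calc ENNReal.ofReal (blockLevel b q p j / m) ^ (r / p) * GamSum b q r p m
      ≤ ENNReal.ofReal ((blockLevel b q p j / m) ^ (r / p))
          * ENNReal.ofReal (C * (m ^ (r / p) * (1 + log (m : ℝ)) ^ ((-b + 1 / q) * r))) := by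
        rw [ENNReal.ofReal_rpow_of_nonneg hσ (by positivity)]
        gcongr
        exact hΓ m
    _ = ENNReal.ofReal (C * ((j + 1 : ℕ) ^ (r / q) : ℝ)⁻¹) := by
        rw [← ENNReal.ofReal_mul (rpow_nonneg hσ _), div_rpow (blockLevel_nonneg b q p j) hm.le,
          blockLevel_rpow, show p / q * (r / p) = r / q by field_simp]
        congr 1
        have hmv : (m : ℝ) ^ (r / p) ≠ 0 := by positivity
        calc _ = C * ((1 + log (m : ℝ)) ^ ((b * q - 1) * (r / q))
              * (1 + log (m : ℝ)) ^ ((-b + 1 / q) * r))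
              * ((m : ℝ) ^ (r / p) / (m : ℝ) ^ (r / p)) / ((j : ℝ) + 1) ^ (r / q) := by ring
          _ = _ := by rw [hcancel, div_self hmv]; push_cast; ring

lemma tsum_gamSeq_mul_hardyTestSeq_rpow_ne_top {b q r p : ℝ} (hq : 0 < q) (hqr : q < r)
    (hrp : r < p) (hb : 1 / q < b) :
    ∑' n : ℕ, (if 1 ≤ n then
      gamSeq b q r p n * hardyTestSeq b q p n ^ (r / p) else 0) ≠ ⊤ := by
  have hr : 0 < r := hq.trans hqr
  have hp : 0 < p := hr.trans hrp
  obtain ⟨C, hC, hΓ⟩ := exists_GamSum_le_of_lt hq hqr hrp hb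
  refine ne_top_of_le_ne_top ?_ ((tsum_mul_stepSeq_rpow_le _ (by positivity)).trans
    (ENNReal.tsum_le_tsum (ofReal_rpow_mul_GamSum_blockScale_le hq hr hp hΓ)))
  rw [← ENNReal.ofReal_tsum_of_nonneg (fun j => by positivity)]
  · exact ENNReal.ofReal_ne_top
  · exact ((summable_nat_add_iff 1).mpr
      (Real.summable_nat_rpow_inv.mpr ((one_lt_div hq).mpr hqr))).mul_left C

/-- with `λ_n = (1+log n)^{−bq}n^{−1}`, `γ_n = (1+log n)^{(−b+1/q)r}n^{r/p−1}`,
`q < r < p`, `b > 1/q`, `u = q/p`, `v = r/p`, `1/w = 1/u − 1/v`, the second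
Bennett–Grosse-Erdmann condition
`∑_n λ_n (∑_{k≥n} λ_k)^{w/v} max_{k≤n}(k^v/Γ_k)^{w/v}` diverges; consequently the
Hardy-type inequality `(∑ λ_n(∑_{k≤n} a_k)^u)^{1/u} ≲ (∑ γ_n a_n^v)^{1/v}` fails for
some non-negative non-increasing sequence `(a_n)`. -/
theorem BGE_condition_diverges (p q r b : ℝ)
    (hq : 0 < q) (hqr : q < r) (hrp : r < p) (hb : 1/q < b) :
    (∑' n : ℕ, if 1 ≤ n then
        lamSeq b q n *
          ((∑' k : ℕ, if n ≤ k then lamSeq b q k else 0) ^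
            (((q*r)/(p*(r-q))) / (r/p))) *
          ((⨆ k ∈ Finset.Icc 1 n, ((k:ℝ≥0∞)) ^ (r/p) / GamSum b q r p k) ^
            (((q*r)/(p*(r-q))) / (r/p)))
      else 0) = ⊤ ∧
    ∀ C : ℝ≥0∞, C ≠ ⊤ → ∃ a : ℕ → ℝ≥0∞,
      (∀ m n : ℕ, 1 ≤ m → m ≤ n → a n ≤ a m) ∧
      ¬ ((∑' n : ℕ, if 1 ≤ n then
            lamSeq b q n * (∑ k ∈ Finset.Icc 1 n, a k) ^ (q/p) else 0) ^ (p/q)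
          ≤ C * (∑' n : ℕ, if 1 ≤ n then
            gamSeq b q r p n * (a n) ^ (r/p) else 0) ^ (p/r)) := by
  have hr : 0 < r := hq.trans hqr
  have hp : 0 < p := hr.trans hrp
  have hbq : 1 < b * q := by rwa [div_lt_iff₀ hq] at hb
  refine ⟨tsum_BGE_condition_eq_top hq hqr hrp hb, fun C hC => ⟨hardyTestSeq b q p,
    fun m n _ hmn => stepSeq_antitone _ _ hmn, ?_⟩⟩
  rw [tsum_lamSeq_mul_sum_hardyTestSeq_rpow_eq_top hq hp hbq,
    ENNReal.top_rpow_of_pos (by positivity), top_le_iff]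
  exact ENNReal.mul_ne_top hC (ENNReal.rpow_ne_top_of_nonneg (by positivity)
    (tsum_gamSeq_mul_hardyTestSeq_rpow_ne_top hq hqr hrp hb))
end

section
/- Let α > 0, p ∈ (2d/(d+1), ∞), q ∈ (0, ∞], b > 1/q. Let F₀ : (0,∞) → [0,∞) be non-increasing (or general monotone with F₀(u) ≲ F₀(z) for z ≤ u ≤ 2z). If q ≥ p, then (∫₁^∞ t^{αq}(1+log t)^{−bq}(∫_t^∞ u^{dp−d}F₀(u)^p du/u)^{q/p} dt/t)^{1/q} ≲ (∫₁^∞ (1+log t)^{−bq}(∫₁^t u^{αp+dp−d}F₀(u)^p du/u)^{q/p} dt/t)^{1/q}. -/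
open MeasureTheory
open scoped ENNReal

/-!
Write `r = q / p ≥ 1`, `ℓ t = 1 + log t`, `G u = u ^ (dp - d) F(u) ^ p / u` and
`H t = ∫₁ᵗ u ^ (αp) G(u) du`. The `q`-th power of the left side is
`∫₁^∞ t ^ (αq) ℓ(t) ^ (-bq) (∫ₜ^∞ G) ^ r dt/t`, and Minkowski's integral inequality bounds
its `r`-th root by `∫₁^∞ G(u) W(u) ^ (1/r) du`, where `W(u) = ∫₁ᵘ t ^ (αq) ℓ(t) ^ (-bq) dt/t`.
Since `W(u) ≲ u ^ (αq) ℓ(u) ^ (-bq)`, this is `≲ ∫₁^∞ u ^ (αp) G(u) ℓ(u) ^ (-bp) du`.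
Writing `ℓ(u) ^ (-bp) = bp ∫ᵤ^∞ ℓ(t) ^ (-bp-1) dt/t` and exchanging the integrals turns the
latter into `bp ∫₁^∞ ℓ(t) ^ (-bp-1) H(t) dt/t`, and Hölder's inequality for `dt/t` bounds it
by `(∫₁^∞ ℓ(t) ^ (-bq) H(t) ^ r dt/t) ^ (1/r)`, because `ℓ ^ (-1)` lies in `L^s(dt/t)` for
every `s > 1`.
-/

open Set

theorem ENNReal.rpow_le_of_le_mul_rpow {x M : ℝ≥0∞} {s t : ℝ} (hx : x ≠ ∞) (hs : 0 < s)
    (ht : 0 < t) (hst : s + t = 1) (h : x ≤ M * x ^ t) : x ^ s ≤ M := by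
  rcases eq_or_ne x 0 with rfl | hx0
  · simp [ENNReal.zero_rpow_of_pos hs]
  rw [← ENNReal.mul_le_mul_iff_left (ENNReal.rpow_pos (pos_iff_ne_zero.2 hx0) hx).ne'
    (ENNReal.rpow_ne_top_of_nonneg ht.le hx), ← ENNReal.rpow_add _ _ hx0 hx, hst,
    ENNReal.rpow_one]
  exact h

theorem ENNReal.iSup_mul_iSup_of_monotone {f g : ℕ → ℝ≥0∞} (hf : Monotone f)
    (hg : Monotone g) : (⨆ n, f n) * ⨆ n, g n = ⨆ n, f n * g n := by
  refine le_antisymm ?_ ENNReal.iSup_mul_le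
  rw [ENNReal.iSup_mul]
  refine iSup_le fun m => ?_
  rw [ENNReal.mul_iSup]
  exact iSup_le fun n =>
    le_iSup_of_le (max m n) (mul_le_mul' (hf (le_max_left m n)) (hg (le_max_right m n)))

theorem ENNReal.iSup_rpow_s13 {ι : Sort*} (f : ι → ℝ≥0∞) {r : ℝ} (hr : 0 < r) :
    (⨆ i, f i) ^ r = ⨆ i, f i ^ r :=
  Monotone.map_iSup_of_continuousAt (f := fun x : ℝ≥0∞ => x ^ r)
    ENNReal.continuous_rpow_const.continuousAt (ENNReal.monotone_rpow_of_nonneg hr.le)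
    (ENNReal.zero_rpow_of_pos hr)

theorem lintegral_mul_rpow_sub_one_le {α : Type*} [MeasurableSpace α] (μ : Measure α)
    {w T : α → ℝ≥0∞} (hw : Measurable w) (hT : Measurable T) {r s : ℝ}
    (hrs : r.HolderConjugate s) :
    ∫⁻ x, w x * T x ^ (r - 1) ∂μ
      ≤ (∫⁻ x, w x ∂μ) ^ (1 / r) * (∫⁻ x, w x * T x ^ r ∂μ) ^ (1 / s) := by
  have hsum : 1 / r + 1 / s = 1 := by simpa only [one_div] using hrs.inv_add_inv_eq_one
  have hsplit : ∀ x, w x * T x ^ (r - 1) = w x ^ (1 / r) * (w x ^ (1 / s) * T x ^ (r - 1)) :=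
    fun x => by
      rw [← mul_assoc, ← ENNReal.rpow_add_of_nonneg _ _ (one_div_nonneg.2 hrs.nonneg)
        (one_div_nonneg.2 hrs.symm.nonneg), hsum, ENNReal.rpow_one]
  have hpow : ∀ x, (w x ^ (1 / s) * T x ^ (r - 1)) ^ s = w x * T x ^ r := fun x => by
    rw [ENNReal.mul_rpow_of_nonneg _ _ hrs.symm.nonneg, ← ENNReal.rpow_mul, ← ENNReal.rpow_mul,
      one_div_mul_cancel hrs.symm.ne_zero, ENNReal.rpow_one, hrs.sub_one_mul_conj]
  calc ∫⁻ x, w x * T x ^ (r - 1) ∂μ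
      = ∫⁻ x, w x ^ (1 / r) * (w x ^ (1 / s) * T x ^ (r - 1)) ∂μ := lintegral_congr hsplit
    _ ≤ (∫⁻ x, (w x ^ (1 / r)) ^ r ∂μ) ^ (1 / r) *
          (∫⁻ x, (w x ^ (1 / s) * T x ^ (r - 1)) ^ s ∂μ) ^ (1 / s) :=
        ENNReal.lintegral_mul_le_Lp_mul_Lq μ hrs (hw.pow_const _).aemeasurable
          ((hw.pow_const _).mul (hT.pow_const _)).aemeasurable
    _ = (∫⁻ x, w x ∂μ) ^ (1 / r) * (∫⁻ x, w x * T x ^ r ∂μ) ^ (1 / s) := by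
        simp only [hpow, ← ENNReal.rpow_mul, one_div_mul_cancel hrs.ne_zero, ENNReal.rpow_one]

theorem lintegral_mul_lintegral_Ioi_swap {h g : ℝ → ℝ≥0∞} (hh : Measurable h)
    (hg : Measurable g) (a : ℝ) :
    ∫⁻ t in Ioi a, h t * ∫⁻ u in Ioi t, g u
      = ∫⁻ u in Ioi a, g u * ∫⁻ t in Ioo a u, h t := by
  set F : ℝ × ℝ → ℝ≥0∞ := {p | p.1 < p.2}.indicator fun p => h p.1 * g p.2
  have hF : Measurable F := ((hh.comp measurable_fst).mul (hg.comp measurable_snd)).indicator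
    (measurableSet_lt measurable_fst measurable_snd)
  have hleft : ∀ t ∈ Ioi a, ∫⁻ u in Ioi a, F (t, u) = h t * ∫⁻ u in Ioi t, g u := by
    intro t ht
    have hFt : ∀ u, F (t, u) = (Ioi t).indicator (fun u => h t * g u) u := fun u => by
      by_cases htu : t < u <;> simp [F, htu]
    simp_rw [hFt]
    rw [lintegral_indicator measurableSet_Ioi, Measure.restrict_restrict measurableSet_Ioi,
      Ioi_inter_Ioi, max_eq_left (le_of_lt ht), lintegral_const_mul _ hg]
  have hright : ∀ u ∈ Ioi a, ∫⁻ t in Ioi a, F (t, u) = g u * ∫⁻ t in Ioo a u, h t := by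
    intro u _
    have hFu : ∀ t, F (t, u) = (Iio u).indicator (fun t => g u * h t) t := fun t => by
      by_cases htu : t < u <;> simp [F, htu, mul_comm]
    simp_rw [hFu]
    rw [lintegral_indicator measurableSet_Iio, Measure.restrict_restrict measurableSet_Iio,
      Iio_inter_Ioi, lintegral_const_mul _ hh]
  rw [← setLIntegral_congr_fun measurableSet_Ioi hleft,
    ← setLIntegral_congr_fun measurableSet_Ioi hright]
  exact lintegral_lintegral_swap hF.aemeasurable

theorem measurable_lintegral_Ioi (g : ℝ → ℝ≥0∞) :
    Measurable fun t => ∫⁻ u in Ioi t, g u :=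
  Antitone.measurable fun _ _ hst => lintegral_mono_set (Ioi_subset_Ioi hst)

theorem lintegral_rpow_lintegral_Ioi_le_of_ne_top {w g : ℝ → ℝ≥0∞} (hw : Measurable w)
    (hg : Measurable g) {r : ℝ} (hr : 1 ≤ r) (a : ℝ)
    (hL : ∫⁻ t in Ioi a, w t * (∫⁻ u in Ioi t, g u) ^ r ≠ ∞) :
    (∫⁻ t in Ioi a, w t * (∫⁻ u in Ioi t, g u) ^ r) ^ (1 / r)
      ≤ ∫⁻ u in Ioi a, g u * (∫⁻ t in Ioo a u, w t) ^ (1 / r) := by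
  set T : ℝ → ℝ≥0∞ := fun t => ∫⁻ u in Ioi t, g u
  set L := ∫⁻ t in Ioi a, w t * T t ^ r
  have hT : Measurable T := measurable_lintegral_Ioi g
  rcases hr.eq_or_lt with rfl | hr1
  · simp only [L, div_one, ENNReal.rpow_one]
    exact (lintegral_mul_lintegral_Ioi_swap hw hg a).le
  obtain ⟨s, hrs⟩ : ∃ s, r.HolderConjugate s := ⟨_, .conjExponent hr1⟩
  have hfubini : L = ∫⁻ u in Ioi a, g u * ∫⁻ t in Ioo a u, w t * T t ^ (r - 1) := by
    rw [← lintegral_mul_lintegral_Ioi_swap (h := fun t => w t * T t ^ (r - 1))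
      (hw.mul (hT.pow_const _)) hg]
    refine lintegral_congr fun t => ?_
    change w t * T t ^ r = w t * T t ^ (r - 1) * T t
    have hsplit := ENNReal.rpow_add_of_nonneg (x := T t) (r - 1) 1 (by linarith) zero_le_one
    rw [sub_add_cancel, ENNReal.rpow_one] at hsplit
    rw [hsplit, mul_assoc]
  have hholder : ∀ u, ∫⁻ t in Ioo a u, w t * T t ^ (r - 1)
      ≤ (∫⁻ t in Ioo a u, w t) ^ (1 / r) * L ^ (1 / s) := fun u =>
    (lintegral_mul_rpow_sub_one_le _ hw hT hrs).trans <| by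
      gcongr
      · exact one_div_nonneg.2 hrs.symm.nonneg
      · exact lintegral_mono_set Ioo_subset_Ioi_self
  have hsum : 1 / r + 1 / s = 1 := by simpa only [one_div] using hrs.inv_add_inv_eq_one
  refine ENNReal.rpow_le_of_le_mul_rpow hL (one_div_pos.2 hrs.pos) (one_div_pos.2 hrs.symm.pos)
    hsum ?_
  calc L = ∫⁻ u in Ioi a, g u * ∫⁻ t in Ioo a u, w t * T t ^ (r - 1) := hfubini
    _ ≤ ∫⁻ u in Ioi a, g u * (∫⁻ t in Ioo a u, w t) ^ (1 / r) * L ^ (1 / s) :=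
        lintegral_mono fun u => by rw [mul_assoc]; gcongr; exact hholder u
    _ = (∫⁻ u in Ioi a, g u * (∫⁻ t in Ioo a u, w t) ^ (1 / r)) * L ^ (1 / s) :=
        lintegral_mul_const _ (hg.mul (Monotone.measurable fun u v huv =>
          ENNReal.rpow_le_rpow (lintegral_mono_set (Ioo_subset_Ioo_right huv))
            (one_div_nonneg.2 hrs.nonneg)))

noncomputable def truncation (n : ℕ) (f : ℝ → ℝ≥0∞) : ℝ → ℝ≥0∞ :=
  (Iio (n : ℝ)).indicator fun x => min (f x) n

theorem measurable_truncation {f : ℝ → ℝ≥0∞} (hf : Measurable f) (n : ℕ) :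
    Measurable (truncation n f) :=
  (hf.min measurable_const).indicator measurableSet_Iio

theorem truncation_le (n : ℕ) (f : ℝ → ℝ≥0∞) (x : ℝ) : truncation n f x ≤ f x :=
  (indicator_le_self' (fun _ _ => zero_le) x).trans (min_le_left _ _)

theorem truncation_le_indicator (n : ℕ) (f : ℝ → ℝ≥0∞) :
    truncation n f ≤ (Iio (n : ℝ)).indicator fun _ => (n : ℝ≥0∞) :=
  fun _ => indicator_le_indicator (min_le_right _ _)

theorem monotone_truncation (f : ℝ → ℝ≥0∞) (x : ℝ) :
    Monotone fun n => truncation n f x := by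
  intro m n hmn
  by_cases hx : x < m
  · have hn : x < n := hx.trans_le (Nat.cast_le.2 hmn)
    simp only [truncation, indicator_of_mem (mem_Iio.2 hx), indicator_of_mem (mem_Iio.2 hn)]
    gcongr
  · simp [truncation, indicator_of_notMem (notMem_Iio.2 (not_lt.1 hx))]

theorem iSup_truncation (f : ℝ → ℝ≥0∞) (x : ℝ) : ⨆ n, truncation n f x = f x := by
  refine le_antisymm (iSup_le fun n => truncation_le n f x) ?_
  obtain ⟨k, hk⟩ := exists_nat_gt x
  calc f x = ⨆ m : ℕ, min (f x) m := by rw [← inf_iSup_eq, ENNReal.iSup_natCast, inf_top_eq]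
    _ ≤ ⨆ n, truncation n f x := iSup_le fun m => le_iSup_of_le (m + k) <| by
        have hx : x < ↑(m + k) :=
          hk.trans_le (by push_cast; linarith [m.cast_nonneg' (α := ℝ)])
        rw [truncation, indicator_of_mem (mem_Iio.2 hx)]
        gcongr
        omega

theorem lintegral_truncation_Ioi_le (n : ℕ) (f : ℝ → ℝ≥0∞) {a t : ℝ} (ht : a ≤ t) :
    ∫⁻ x in Ioi t, truncation n f x ≤ n * volume (Ioo a n) :=
  calc ∫⁻ x in Ioi t, truncation n f x
      ≤ ∫⁻ x in Ioi t, (Iio (n : ℝ)).indicator (fun _ => (n : ℝ≥0∞)) x :=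
        lintegral_mono (truncation_le_indicator n f)
    _ = n * volume (Ioo t n) := by
        rw [lintegral_indicator_const measurableSet_Iio, Measure.restrict_apply measurableSet_Iio,
          Iio_inter_Ioi]
    _ ≤ n * volume (Ioo a n) := by gcongr

/-- Minkowski's integral inequality for the tail integrals of `g` in `L ^ r (w)`. Truncating
`w` and `g` reduces it to the case of a finite left side. -/
theorem lintegral_rpow_lintegral_Ioi_le {w g : ℝ → ℝ≥0∞} (hw : Measurable w)
    (hg : Measurable g) {r : ℝ} (hr : 1 ≤ r) (a : ℝ) :
    (∫⁻ t in Ioi a, w t * (∫⁻ u in Ioi t, g u) ^ r) ^ (1 / r)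
      ≤ ∫⁻ u in Ioi a, g u * (∫⁻ t in Ioo a u, w t) ^ (1 / r) := by
  have hr0 : 0 < r := by linarith
  set L : ℕ → ℝ≥0∞ := fun n =>
    ∫⁻ t in Ioi a, truncation n w t * (∫⁻ u in Ioi t, truncation n g u) ^ r
  have hmono : ∀ t, Monotone fun n => (∫⁻ u in Ioi t, truncation n g u) ^ r :=
    fun t m n hmn =>
      ENNReal.rpow_le_rpow (lintegral_mono fun u => monotone_truncation g u hmn) hr0.le
  have hsup : ∫⁻ t in Ioi a, w t * (∫⁻ u in Ioi t, g u) ^ r = ⨆ n, L n := by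
    refine (lintegral_congr fun t => ?_).trans (lintegral_iSup
      (fun n => (measurable_truncation hw n).mul ((measurable_lintegral_Ioi _).pow_const r))
      fun m n hmn t => mul_le_mul' (monotone_truncation w t hmn) (hmono t hmn))
    rw [← ENNReal.iSup_mul_iSup_of_monotone (monotone_truncation w t) (hmono t),
      iSup_truncation, ← ENNReal.iSup_rpow_s13 _ hr0, ← lintegral_iSup (measurable_truncation hg)
        fun m n hmn u => monotone_truncation g u hmn]
    simp only [iSup_truncation]
  have hfin : ∀ n, L n ≠ ∞ := by
    intro n
    set B : ℝ≥0∞ := n * volume (Ioo a n)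
    have hB : B ≠ ∞ := ENNReal.mul_ne_top (ENNReal.natCast_ne_top n) measure_Ioo_lt_top.ne
    refine ne_top_of_le_ne_top
      (ENNReal.mul_ne_top hB (ENNReal.rpow_ne_top_of_nonneg hr0.le hB)) ?_
    calc L n
        ≤ ∫⁻ t in Ioi a, (Iio (n : ℝ)).indicator (fun _ => (n : ℝ≥0∞)) t * B ^ r :=
          setLIntegral_mono' measurableSet_Ioi fun t ht => mul_le_mul'
            (truncation_le_indicator n w t)
            (ENNReal.rpow_le_rpow (lintegral_truncation_Ioi_le n g (le_of_lt ht)) hr0.le)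
      _ = B * B ^ r := by
          rw [lintegral_mul_const _ (measurable_const.indicator measurableSet_Iio),
            lintegral_indicator_const measurableSet_Iio,
            Measure.restrict_apply measurableSet_Iio, Iio_inter_Ioi]
  rw [hsup, ENNReal.iSup_rpow_s13 _ (by positivity)]
  refine iSup_le fun n => (lintegral_rpow_lintegral_Ioi_le_of_ne_top
    (measurable_truncation hw n) (measurable_truncation hg n) hr a (hfin n)).trans ?_
  gcongr with u
  · exact truncation_le n g u
  · exact truncation_le n w _

theorem lintegral_Ioo_ofReal_le_sub_of_le_deriv {f φ φ' : ℝ → ℝ} {a b : ℝ} (hab : a ≤ b)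
    (hφ : ContinuousOn φ (Icc a b)) (hderiv : ∀ x ∈ Ioo a b, HasDerivAt φ (φ' x) x)
    (hf : ∀ x ∈ Ioo a b, 0 ≤ f x) (hfφ : ∀ x ∈ Ioo a b, f x ≤ φ' x) :
    ∫⁻ x in Ioo a b, ENNReal.ofReal (f x) ≤ ENNReal.ofReal (φ b - φ a) := by
  have hmono : MonotoneOn φ (Icc a b) := by
    refine monotoneOn_of_hasDerivWithinAt_nonneg (f' := φ') (convex_Icc a b) hφ ?_ ?_ <;>
      rw [interior_Icc]
    · exact fun x hx => (hderiv x hx).hasDerivWithinAt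
    · exact fun x hx => (hf x hx).trans (hfφ x hx)
  have himage : φ '' Ioo a b ⊆ Icc (φ a) (φ b) := by
    rintro _ ⟨x, hx, rfl⟩
    exact ⟨hmono (left_mem_Icc.2 hab) (Ioo_subset_Icc_self hx) hx.1.le,
      hmono (Ioo_subset_Icc_self hx) (right_mem_Icc.2 hab) hx.2.le⟩
  calc ∫⁻ x in Ioo a b, ENNReal.ofReal (f x)
      ≤ ∫⁻ x in Ioo a b, ENNReal.ofReal (φ' x) :=
        setLIntegral_mono' measurableSet_Ioo fun x hx => ENNReal.ofReal_le_ofReal (hfφ x hx)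
    _ = volume (φ '' Ioo a b) :=
        lintegral_deriv_eq_volume_image_of_monotoneOn measurableSet_Ioo
          (fun x hx => (hderiv x hx).hasDerivWithinAt) (hmono.mono Ioo_subset_Icc_self)
    _ ≤ ENNReal.ofReal (φ b - φ a) := by
        rw [← Real.volume_Icc]
        exact measure_mono himage

theorem lintegral_Ioi_rpow_of_lt {a c : ℝ} (ha : a < -1) (hc : 0 < c) :
    ∫⁻ x in Ioi c, ENNReal.ofReal (x ^ a) = ENNReal.ofReal (-c ^ (a + 1) / (a + 1)) := by
  rw [← integral_Ioi_rpow_of_lt ha hc, ofReal_integral_eq_lintegral_ofReal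
    (integrableOn_Ioi_rpow_of_lt ha hc)]
  filter_upwards [ae_restrict_mem measurableSet_Ioi] with x hx
  exact Real.rpow_nonneg (hc.trans hx).le _

theorem one_add_log_pos {t : ℝ} (ht : 1 ≤ t) : 0 < 1 + Real.log t := by
  linarith [Real.log_nonneg ht]

theorem lintegral_Ioi_one_add_log_rpow {e u : ℝ} (he : 0 < e) (hu : 1 ≤ u) :
    ∫⁻ t in Ioi u, ENNReal.ofReal ((1 + Real.log t) ^ (-(e + 1))) * ENNReal.ofReal t⁻¹
      = ENNReal.ofReal ((1 + Real.log u) ^ (-e) / e) := by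
  have hu0 : 0 < u := zero_lt_one.trans_le hu
  have himage : (fun t => 1 + Real.log t) '' Ioi u = Ioi (1 + Real.log u) := by
    rw [← image_image (fun x => 1 + x), Real.image_log_Ioi hu0, image_const_add_Ioi]
  have hderiv : ∀ t ∈ Ioi u, HasDerivWithinAt (fun t => 1 + Real.log t) t⁻¹ (Ioi u) t :=
    fun t ht => ((Real.hasDerivAt_log (hu0.trans ht).ne').const_add 1).hasDerivWithinAt
  have hmono : MonotoneOn (fun t => 1 + Real.log t) (Ioi u) := fun s hs t _ hst =>
    add_le_add_right (Real.log_le_log (hu0.trans hs) hst) 1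
  have hsubst := lintegral_image_eq_lintegral_deriv_mul_of_monotoneOn measurableSet_Ioi hderiv
    hmono (fun x => ENNReal.ofReal (x ^ (-(e + 1))))
  rw [himage, lintegral_Ioi_rpow_of_lt (by linarith) (one_add_log_pos hu)] at hsubst
  rw [setLIntegral_congr_fun measurableSet_Ioi (fun t _ => mul_comm _ _), ← hsubst,
    show -(e + 1) + 1 = -e by ring, neg_div_neg_eq]

theorem hasDerivAt_rpow_mul_add_log_rpow {c e A t : ℝ} (ht : 0 < t)
    (hA : 0 < A + Real.log t) :
    HasDerivAt (fun s => s ^ c * (A + Real.log s) ^ (-e))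
      (t ^ c / t * (A + Real.log t) ^ (-e) * (c - e / (A + Real.log t))) t := by
  refine ((Real.hasDerivAt_rpow_const (p := c) (Or.inl ht.ne')).mul
    (((Real.hasDerivAt_log ht.ne').const_add A).rpow_const (p := -e)
      (Or.inl hA.ne'))).congr_deriv ?_
  rw [Real.rpow_sub_one ht.ne', Real.rpow_sub_one hA.ne']
  field_simp
  ring

theorem one_add_log_rpow_neg_le {A e t : ℝ} (hA : 1 ≤ A) (ht : 1 ≤ t) (he : 0 ≤ e) :
    (1 + Real.log t) ^ (-e) ≤ A ^ e * (A + Real.log t) ^ (-e) := by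
  have hl := one_add_log_pos ht
  calc (1 + Real.log t) ^ (-e) = A ^ e * (A * (1 + Real.log t)) ^ (-e) := by
        rw [Real.mul_rpow (by linarith) hl.le, ← mul_assoc, ← Real.rpow_add (by linarith),
          add_neg_cancel, Real.rpow_zero, one_mul]
    _ ≤ A ^ e * (A + Real.log t) ^ (-e) := by
        refine mul_le_mul_of_nonneg_left (Real.rpow_le_rpow_of_nonpos ?_ ?_ (by linarith))
          (by positivity)
        · linarith [Real.log_nonneg ht]
        · nlinarith [Real.log_nonneg ht]

theorem rpow_mul_one_add_log_rpow_le_deriv {c e A t : ℝ} (hc : 0 < c) (he : 0 ≤ e)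
    (hA : 1 ≤ A) (hAe : e / A ≤ c / 2) (ht : 1 ≤ t) :
    t ^ c * (1 + Real.log t) ^ (-e) * t⁻¹ ≤
      2 * A ^ e / c * (t ^ c / t * (A + Real.log t) ^ (-e) * (c - e / (A + Real.log t))) := by
  have hB : 0 < A + Real.log t := by linarith [Real.log_nonneg ht]
  have hdiv : e / (A + Real.log t) ≤ c / 2 := (div_le_div_of_nonneg_left he (by linarith)
    (by linarith [Real.log_nonneg ht])).trans hAe
  have : 0 < t := by linarith
  calc t ^ c * (1 + Real.log t) ^ (-e) * t⁻¹
      ≤ t ^ c * (A ^ e * (A + Real.log t) ^ (-e)) * t⁻¹ := by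
        gcongr
        exact one_add_log_rpow_neg_le hA ht he
    _ = 2 * A ^ e / c * (t ^ c / t * (A + Real.log t) ^ (-e) * (c / 2)) := by field_simp
    _ ≤ _ := by gcongr; linarith

theorem lintegral_Ioo_rpow_mul_one_add_log_rpow_le {c e : ℝ} (hc : 0 < c) (he : 0 ≤ e) :
    ∃ K : ℝ, 0 ≤ K ∧ ∀ u, 1 ≤ u →
      ∫⁻ t in Ioo 1 u, ENNReal.ofReal (t ^ c * (1 + Real.log t) ^ (-e)) * ENNReal.ofReal t⁻¹
        ≤ ENNReal.ofReal (K * (u ^ c * (1 + Real.log u) ^ (-e))) := by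
  -- For `A ≥ 2e/c` the derivative of `t ^ c (A + log t) ^ (-e)` is at least
  -- `(c/2) t ^ (c-1) (A + log t) ^ (-e)`, which dominates the integrand up to `A ^ e`.
  set A := max 1 (2 * e / c)
  have hA1 : 1 ≤ A := le_max_left _ _
  have hAe : e / A ≤ c / 2 := by
    rw [div_le_iff₀ (by linarith)]
    have := le_max_right 1 (2 * e / c)
    rw [div_le_iff₀ hc] at this
    nlinarith
  set K := 2 * A ^ e / c
  refine ⟨K, by positivity, fun u hu => ?_⟩
  have hderiv : ∀ t, 1 ≤ t → HasDerivAt (fun s => K * (s ^ c * (A + Real.log s) ^ (-e)))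
      (K * (t ^ c / t * (A + Real.log t) ^ (-e) * (c - e / (A + Real.log t)))) t :=
    fun t ht => (hasDerivAt_rpow_mul_add_log_rpow (by linarith)
      (by linarith [Real.log_nonneg ht])).const_mul K
  have hnonneg : ∀ t ∈ Ioo 1 u, 0 ≤ t ^ c * (1 + Real.log t) ^ (-e) * t⁻¹ := fun t ht => by
    have := one_add_log_pos ht.1.le
    have : 0 < t := by linarith [ht.1]
    positivity
  calc ∫⁻ t in Ioo 1 u, ENNReal.ofReal (t ^ c * (1 + Real.log t) ^ (-e)) * ENNReal.ofReal t⁻¹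
      = ∫⁻ t in Ioo 1 u, ENNReal.ofReal (t ^ c * (1 + Real.log t) ^ (-e) * t⁻¹) :=
        setLIntegral_congr_fun measurableSet_Ioo fun t ht =>
          (ENNReal.ofReal_mul' (inv_nonneg.2 (by linarith [ht.1]))).symm
    _ ≤ ENNReal.ofReal (K * (u ^ c * (A + Real.log u) ^ (-e)) -
          K * (1 ^ c * (A + Real.log 1) ^ (-e))) :=
        lintegral_Ioo_ofReal_le_sub_of_le_deriv hu
          (fun t ht => (hderiv t ht.1).continuousAt.continuousWithinAt)
          (fun t ht => hderiv t ht.1.le) hnonneg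
          fun t ht => rpow_mul_one_add_log_rpow_le_deriv hc he hA1 hAe ht.1.le
    _ ≤ ENNReal.ofReal (K * (u ^ c * (1 + Real.log u) ^ (-e))) := by
        refine ENNReal.ofReal_le_ofReal ?_
        have hA0 : 0 ≤ K * (1 ^ c * (A + Real.log 1) ^ (-e)) := by
          rw [Real.log_one, add_zero]
          positivity
        have hAu : (A + Real.log u) ^ (-e) ≤ (1 + Real.log u) ^ (-e) :=
          Real.rpow_le_rpow_of_nonpos (one_add_log_pos hu) (by linarith) (by linarith)
        have := mul_le_mul_of_nonneg_left (mul_le_mul_of_nonneg_left hAu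
          (by positivity : 0 ≤ u ^ c)) (by positivity : 0 ≤ K)
        linarith

theorem rpow_lintegral_tail_power_log_weight_le {c β r : ℝ} (hc : 0 < c) (hβ : 0 ≤ β)
    (hr : 1 ≤ r) :
    ∃ K : ℝ≥0∞, K ≠ ∞ ∧ ∀ G : ℝ → ℝ≥0∞, Measurable G →
      (∫⁻ t in Ioi 1, ENNReal.ofReal (t ^ (c * r) * (1 + Real.log t) ^ (-(β * r))) *
          (∫⁻ u in Ioi t, G u) ^ r * ENNReal.ofReal t⁻¹) ^ (1 / r)
        ≤ K * ∫⁻ u in Ioi 1, ENNReal.ofReal (u ^ c) * G u *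
            ENNReal.ofReal ((1 + Real.log u) ^ (-β)) := by
  have hr0 : 0 < r := by linarith
  obtain ⟨K, hK0, hK⟩ := lintegral_Ioo_rpow_mul_one_add_log_rpow_le (e := β * r)
    (mul_pos hc hr0) (by positivity)
  refine ⟨ENNReal.ofReal (K ^ (1 / r)), ENNReal.ofReal_ne_top, fun G hG => ?_⟩
  have hweight : ∀ u ∈ Ioi (1 : ℝ), (∫⁻ t in Ioo 1 u, ENNReal.ofReal
      (t ^ (c * r) * (1 + Real.log t) ^ (-(β * r))) * ENNReal.ofReal t⁻¹) ^ (1 / r)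
      ≤ ENNReal.ofReal (K ^ (1 / r)) * (ENNReal.ofReal (u ^ c) *
          ENNReal.ofReal ((1 + Real.log u) ^ (-β))) := by
    intro u hu
    have hu0 : 0 ≤ u := by linarith [mem_Ioi.1 hu]
    have hl := one_add_log_pos (le_of_lt hu)
    refine (ENNReal.rpow_le_rpow (hK u (le_of_lt hu)) (by positivity)).trans_eq ?_
    rw [← ENNReal.ofReal_mul (by positivity), ← ENNReal.ofReal_mul (by positivity),
      ENNReal.ofReal_rpow_of_nonneg (by positivity) (by positivity),
      Real.mul_rpow hK0 (by positivity), Real.mul_rpow (by positivity) (by positivity),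
      ← Real.rpow_mul hu0, ← Real.rpow_mul hl.le, neg_mul, mul_assoc, mul_assoc,
      mul_one_div_cancel hr0.ne', mul_one, mul_one]
  calc _ = (∫⁻ t in Ioi 1, ENNReal.ofReal (t ^ (c * r) * (1 + Real.log t) ^ (-(β * r))) *
          ENNReal.ofReal t⁻¹ * (∫⁻ u in Ioi t, G u) ^ r) ^ (1 / r) := by
        congr 1
        exact lintegral_congr fun t => mul_right_comm _ _ _
    _ ≤ ∫⁻ u in Ioi 1, G u * (∫⁻ t in Ioo 1 u, ENNReal.ofReal
          (t ^ (c * r) * (1 + Real.log t) ^ (-(β * r))) * ENNReal.ofReal t⁻¹) ^ (1 / r) :=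
        lintegral_rpow_lintegral_Ioi_le (by fun_prop) hG hr 1
    _ ≤ ∫⁻ u in Ioi 1, G u * (ENNReal.ofReal (K ^ (1 / r)) * (ENNReal.ofReal (u ^ c) *
          ENNReal.ofReal ((1 + Real.log u) ^ (-β)))) :=
        setLIntegral_mono' measurableSet_Ioi fun u hu => by gcongr; exact hweight u hu
    _ = _ := by
        rw [← lintegral_const_mul' _ _ ENNReal.ofReal_ne_top]
        exact lintegral_congr fun u => by ring

theorem lintegral_mul_one_add_log_rpow_eq {g : ℝ → ℝ≥0∞} (hg : Measurable g) {β : ℝ}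
    (hβ : 0 < β) :
    ∫⁻ u in Ioi 1, g u * ENNReal.ofReal ((1 + Real.log u) ^ (-β))
      = ENNReal.ofReal β * ∫⁻ t in Ioi 1,
          ENNReal.ofReal ((1 + Real.log t) ^ (-(β + 1))) * ENNReal.ofReal t⁻¹ *
            ∫⁻ u in Ioo 1 t, g u := by
  have htail : ∀ u ∈ Ioi (1 : ℝ), ENNReal.ofReal ((1 + Real.log u) ^ (-β)) =
      ENNReal.ofReal β *
        ∫⁻ t in Ioi u, ENNReal.ofReal ((1 + Real.log t) ^ (-(β + 1))) * ENNReal.ofReal t⁻¹ := by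
    intro u hu
    rw [lintegral_Ioi_one_add_log_rpow hβ (le_of_lt hu), ← ENNReal.ofReal_mul hβ.le,
      mul_div_cancel₀ _ hβ.ne']
  rw [setLIntegral_congr_fun measurableSet_Ioi fun u hu => by rw [htail u hu, mul_left_comm],
    lintegral_const_mul' _ _ ENNReal.ofReal_ne_top,
    lintegral_mul_lintegral_Ioi_swap hg (by fun_prop)]

theorem ofReal_one_add_log_rpow_mul {t : ℝ} (ht : 1 ≤ t) (x y : ℝ) :
    ENNReal.ofReal ((1 + Real.log t) ^ x) * ENNReal.ofReal ((1 + Real.log t) ^ y)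
      = ENNReal.ofReal ((1 + Real.log t) ^ (x + y)) := by
  rw [← ENNReal.ofReal_mul (Real.rpow_nonneg (one_add_log_pos ht).le _),
    Real.rpow_add (one_add_log_pos ht)]

theorem ofReal_one_add_log_rpow_rpow {t : ℝ} (ht : 1 ≤ t) (x : ℝ) {y : ℝ} (hy : 0 ≤ y) :
    ENNReal.ofReal ((1 + Real.log t) ^ x) ^ y = ENNReal.ofReal ((1 + Real.log t) ^ (x * y)) := by
  rw [ENNReal.ofReal_rpow_of_nonneg (Real.rpow_nonneg (one_add_log_pos ht).le _) hy,
    ← Real.rpow_mul (one_add_log_pos ht).le]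

theorem lintegral_one_add_log_rpow_mul_le_of_holderConjugate (β : ℝ) {r s : ℝ}
    (hrs : r.HolderConjugate s) {H : ℝ → ℝ≥0∞} (hH : Measurable H) :
    ∫⁻ t in Ioi 1,
        ENNReal.ofReal ((1 + Real.log t) ^ (-(β + 1))) * ENNReal.ofReal t⁻¹ * H t
      ≤ ENNReal.ofReal (1 / (s - 1)) ^ (1 / s) *
          (∫⁻ t in Ioi 1, ENNReal.ofReal ((1 + Real.log t) ^ (-(β * r))) * H t ^ r *
            ENNReal.ofReal t⁻¹) ^ (1 / r) := by
  set ν := (volume.restrict (Ioi (1 : ℝ))).withDensity fun t => ENNReal.ofReal t⁻¹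
  have hν : ∀ f : ℝ → ℝ≥0∞, Measurable f →
      ∫⁻ t, f t ∂ν = ∫⁻ t in Ioi 1, f t * ENNReal.ofReal t⁻¹ := fun f hf => by
    rw [lintegral_withDensity_eq_lintegral_mul _ (by fun_prop) hf]
    exact lintegral_congr fun t => mul_comm _ _
  have hlog : Measurable fun t : ℝ => ENNReal.ofReal ((1 + Real.log t) ^ (-(1 : ℝ))) := by
    fun_prop
  have hA : Measurable fun t : ℝ => ENNReal.ofReal ((1 + Real.log t) ^ (-β)) * H t := by
    fun_prop
  calc ∫⁻ t in Ioi 1,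
        ENNReal.ofReal ((1 + Real.log t) ^ (-(β + 1))) * ENNReal.ofReal t⁻¹ * H t
      = ∫⁻ t in Ioi 1, ENNReal.ofReal ((1 + Real.log t) ^ (-β)) * H t *
          ENNReal.ofReal ((1 + Real.log t) ^ (-(1 : ℝ))) * ENNReal.ofReal t⁻¹ := by
        refine setLIntegral_congr_fun measurableSet_Ioi fun t ht => ?_
        rw [mul_right_comm _ (H t), ofReal_one_add_log_rpow_mul (le_of_lt ht), neg_add]
        ring
    _ = ∫⁻ t, ENNReal.ofReal ((1 + Real.log t) ^ (-β)) * H t *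
          ENNReal.ofReal ((1 + Real.log t) ^ (-(1 : ℝ))) ∂ν := (hν _ (hA.mul hlog)).symm
    _ ≤ (∫⁻ t, (ENNReal.ofReal ((1 + Real.log t) ^ (-β)) * H t) ^ r ∂ν) ^ (1 / r) *
          (∫⁻ t, ENNReal.ofReal ((1 + Real.log t) ^ (-(1 : ℝ))) ^ s ∂ν) ^ (1 / s) :=
        ENNReal.lintegral_mul_le_Lp_mul_Lq ν hrs hA.aemeasurable hlog.aemeasurable
    _ = (∫⁻ t in Ioi 1, ENNReal.ofReal ((1 + Real.log t) ^ (-(β * r))) * H t ^ r *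
          ENNReal.ofReal t⁻¹) ^ (1 / r) * ENNReal.ofReal (1 / (s - 1)) ^ (1 / s) := by
        rw [hν _ (hA.pow_const r), hν _ (hlog.pow_const s)]
        congr 2
        · refine setLIntegral_congr_fun measurableSet_Ioi fun t ht => ?_
          rw [ENNReal.mul_rpow_of_nonneg _ _ hrs.nonneg,
            ofReal_one_add_log_rpow_rpow (le_of_lt ht) _ hrs.nonneg, neg_mul]
        · rw [setLIntegral_congr_fun measurableSet_Ioi fun t ht => by
            rw [ofReal_one_add_log_rpow_rpow (le_of_lt ht) _ hrs.symm.nonneg,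
              show -1 * s = -((s - 1) + 1) by ring],
            lintegral_Ioi_one_add_log_rpow (by linarith [hrs.symm.lt]) le_rfl]
          simp
    _ = _ := mul_comm _ _

theorem lintegral_one_add_log_rpow_mul_le (β : ℝ) {r : ℝ} (hr : 1 ≤ r) :
    ∃ C : ℝ≥0∞, C ≠ ∞ ∧ ∀ H : ℝ → ℝ≥0∞, Measurable H →
      ∫⁻ t in Ioi 1,
          ENNReal.ofReal ((1 + Real.log t) ^ (-(β + 1))) * ENNReal.ofReal t⁻¹ * H t
        ≤ C * (∫⁻ t in Ioi 1, ENNReal.ofReal ((1 + Real.log t) ^ (-(β * r))) * H t ^ r *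
            ENNReal.ofReal t⁻¹) ^ (1 / r) := by
  rcases hr.eq_or_lt with rfl | hr1
  · refine ⟨1, ENNReal.one_ne_top, fun H _ => ?_⟩
    simp only [mul_one, div_one, ENNReal.rpow_one, one_mul]
    refine setLIntegral_mono' measurableSet_Ioi fun t ht => ?_
    rw [mul_right_comm]
    refine mul_le_mul_left (mul_le_mul_left (ENNReal.ofReal_le_ofReal ?_) _) _
    exact Real.rpow_le_rpow_of_exponent_le (by linarith [Real.log_nonneg (le_of_lt ht)])
      (by linarith)
  obtain ⟨s, hrs⟩ : ∃ s, r.HolderConjugate s := ⟨_, .conjExponent hr1⟩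
  exact ⟨_, ENNReal.rpow_ne_top_of_nonneg (one_div_nonneg.2 hrs.symm.nonneg)
    ENNReal.ofReal_ne_top,
    fun H hH => lintegral_one_add_log_rpow_mul_le_of_holderConjugate β hrs hH⟩

theorem GM_tail_dominated_by_head_general (d : ℕ) (α p q b : ℝ)
    (hα : 0 < α) (hp : 2*(d:ℝ)/((d:ℝ)+1) < p) (hq : 0 < q) (hpq : p ≤ q)
    (hb : 1/q < b) (D : ℝ≥0∞) :
    ∃ C : ℝ≥0∞, C ≠ ⊤ ∧ ∀ F : ℝ → ℝ≥0∞, Measurable F →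
      (∀ z u : ℝ, 0 < z → z ≤ u → u ≤ 2*z → F u ≤ D * F z) →
      (∫⁻ t in Set.Ioi (1:ℝ),
          ENNReal.ofReal (t ^ (α*q) * (1 + Real.log t) ^ (-(b*q))) *
            (∫⁻ u in Set.Ioi t,
              ENNReal.ofReal (u ^ ((d:ℝ)*p - d)) * (F u) ^ p *
                ENNReal.ofReal (u⁻¹)) ^ (q/p) *
            ENNReal.ofReal (t⁻¹)) ^ (1/q)
      ≤ C * (∫⁻ t in Set.Ioi (1:ℝ),
          ENNReal.ofReal ((1 + Real.log t) ^ (-(b*q))) *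
            (∫⁻ u in Set.Ioo (1:ℝ) t,
              ENNReal.ofReal (u ^ (α*p + (d:ℝ)*p - d)) * (F u) ^ p *
                ENNReal.ofReal (u⁻¹)) ^ (q/p) *
            ENNReal.ofReal (t⁻¹)) ^ (1/q) := by
  have hp0 : 0 < p := lt_of_le_of_lt (by positivity) hp
  have hr : 1 ≤ q / p := (one_le_div hp0).2 hpq
  have hb0 : 0 < b := (by positivity : 0 < 1 / q).trans hb
  obtain ⟨K, hK, hKG⟩ := rpow_lintegral_tail_power_log_weight_le (mul_pos hα hp0)
    (mul_pos hb0 hp0).le hr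
  obtain ⟨C, hC, hCH⟩ := lintegral_one_add_log_rpow_mul_le (b * p) hr
  refine ⟨(K * (ENNReal.ofReal (b * p) * C)) ^ (1 / p), ENNReal.rpow_ne_top_of_nonneg
    (by positivity) (ENNReal.mul_ne_top hK (ENNReal.mul_ne_top ENNReal.ofReal_ne_top hC)),
    fun F hF _ => ?_⟩
  set G : ℝ → ℝ≥0∞ := fun u =>
    ENNReal.ofReal (u ^ ((d:ℝ)*p - d)) * F u ^ p * ENNReal.ofReal u⁻¹
  have hG : Measurable G := by fun_prop
  have hg : ∀ t, ∫⁻ u in Ioo 1 t, ENNReal.ofReal (u ^ (α*p + (d:ℝ)*p - d)) * F u ^ p *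
      ENNReal.ofReal u⁻¹ = ∫⁻ u in Ioo 1 t, ENNReal.ofReal (u ^ (α * p)) * G u := fun t =>
    setLIntegral_congr_fun measurableSet_Ioo fun u hu => by
      rw [add_sub_assoc, Real.rpow_add (by linarith [hu.1]),
        ENNReal.ofReal_mul (Real.rpow_nonneg (by linarith [hu.1]) _)]
      ring
  have hexp : ∀ x, x * q = x * p * (q / p) := fun x => by field_simp
  simp only [hg, hexp α, hexp b]
  have hhead := hKG G hG
  rw [lintegral_mul_one_add_log_rpow_eq (g := fun u => ENNReal.ofReal (u ^ (α * p)) * G u)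
    (by fun_prop) (mul_pos hb0 hp0)] at hhead
  have hlog := hCH (fun t => ∫⁻ u in Ioo 1 t, ENNReal.ofReal (u ^ (α * p)) * G u)
    (Monotone.measurable fun s t hst => lintegral_mono_set (Ioo_subset_Ioo_right hst))
  have hexp' : 1 / q = 1 / (q / p) * (1 / p) := by field_simp
  rw [hexp', ENNReal.rpow_mul, ENNReal.rpow_mul, ← ENNReal.mul_rpow_of_nonneg _ _ (by positivity)]
  refine ENNReal.rpow_le_rpow (hhead.trans ?_) (by positivity)
  rw [mul_assoc, mul_assoc]
  exact mul_le_mul_right (mul_le_mul_right hlog _) _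

/-- for `α > 0`, `2d/(d+1) < p`, `0 < q`, `p ≤ q`, `b > 1/q` and a
general monotone (e.g. non-increasing) non-negative function `F₀`,
`(∫₁^∞ t^{αq}(1+log t)^{−bq}(∫_t^∞ u^{dp−d}F₀(u)^p du/u)^{q/p} dt/t)^{1/q}
  ≲ (∫₁^∞ (1+log t)^{−bq}(∫₁^t u^{αp+dp−d}F₀(u)^p du/u)^{q/p} dt/t)^{1/q}`. -/
theorem GM_tail_dominated_by_head (d : ℕ) (hd : 1 ≤ d) (α p q b : ℝ)
    (hα : 0 < α) (hp : 2*(d:ℝ)/((d:ℝ)+1) < p) (hq : 0 < q) (hpq : p ≤ q)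
    (hb : 1/q < b) (D : ℝ≥0∞) (hD : D ≠ ⊤) :
    ∃ C : ℝ≥0∞, C ≠ ⊤ ∧ ∀ F : ℝ → ℝ≥0∞, Measurable F →
      (∀ z u : ℝ, 0 < z → z ≤ u → u ≤ 2*z → F u ≤ D * F z) →
      (∫⁻ t in Set.Ioi (1:ℝ),
          ENNReal.ofReal (t ^ (α*q) * (1 + Real.log t) ^ (-(b*q))) *
            (∫⁻ u in Set.Ioi t,
              ENNReal.ofReal (u ^ ((d:ℝ)*p - d)) * (F u) ^ p *
                ENNReal.ofReal (u⁻¹)) ^ (q/p) *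
            ENNReal.ofReal (t⁻¹)) ^ (1/q)
      ≤ C * (∫⁻ t in Set.Ioi (1:ℝ),
          ENNReal.ofReal ((1 + Real.log t) ^ (-(b*q))) *
            (∫⁻ u in Set.Ioo (1:ℝ) t,
              ENNReal.ofReal (u ^ (α*p + (d:ℝ)*p - d)) * (F u) ^ p *
                ENNReal.ofReal (u⁻¹)) ^ (q/p) *
            ENNReal.ofReal (t⁻¹)) ^ (1/q) :=
  GM_tail_dominated_by_head_general d α p q b hα hp hq hpq hb D
end

section
/- Let 1 < r < ∞, 0 < p ≤ q ≤ ∞, b > 1/q. Then for any measurable f on 𝕋^d (or (0,1)), the Lorentz–Zygmund norm satisfies ‖f‖_{L_{r,q}(log L)_{−b+1/q}} ≲ ‖f‖_{L^{(R)}_{r,q,−b,p}}, i.e., (∫₀¹ (t^{1/r}(1−log t)^{−b+1/q} f*(t))^q dt/t)^{1/q} ≲ (∫₀¹ (1−log t)^{−bq}(∫_t¹ (u^{1/r} f*(u))^p du/u)^{q/p} dt/t)^{1/q}. -/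
/-!
Write `g(u) = u^{1/r} f*(u)` and `A(t) = ∫_t^1 g(u)^p du/u`. Since `f*` is non-increasing,
comparing `g(v)^p` with the average of `g^p` over `(v/e, v)` gives `g(v)^p ≤ e^{p/r} A(t)` for
`v ≥ e t`, hence `∫_{et}^1 g^q dv/v ≤ e^{(q-p)/r} A(t)^{q/p}`, a continuous form of
`ℓ_p ↪ ℓ_q`.
On the other side `(1 - log v)^{1-bq} ≤ 3^{bq} ∫_0^{v/e} (1 - log t)^{-bq} dt/t`, because the
weight `1 - log t` stays below `3 (1 - log v)` on a window of logarithmic length `1 - log v`.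
Inserting this into the `q`-th power of the left-hand side and exchanging the order of
integration gives the claim.
-/

open MeasureTheory Set
open scoped ENNReal

lemma setLIntegral_Ioo_ofReal_inv {a b : ℝ} (ha : 0 < a) (hab : a ≤ b) :
    ∫⁻ t in Ioo a b, ENNReal.ofReal t⁻¹ = ENNReal.ofReal (Real.log (b / a)) := by
  have hint : IntegrableOn (fun t : ℝ => t⁻¹) (Ioo a b) :=
    (continuousOn_inv₀.mono fun t ht => (ha.trans_le ht.1).ne').integrableOn_Icc.mono_set
      Ioo_subset_Icc_self
  rw [← ofReal_integral_eq_lintegral_ofReal hint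
    ((ae_restrict_mem measurableSet_Ioo).mono fun t ht => inv_nonneg.2 (ha.trans ht.1).le),
    ← integral_Ioc_eq_integral_Ioo, ← intervalIntegral.integral_of_le hab,
    integral_inv_of_pos ha (ha.trans_le hab)]

lemma ENNReal.rpow_sub_one_mul_self (x : ℝ≥0∞) {y : ℝ} (hy : 1 ≤ y) :
    x ^ (y - 1) * x = x ^ y := by
  conv_rhs => rw [← sub_add_cancel y 1,
    ENNReal.rpow_add_of_nonneg _ _ (sub_nonneg.2 hy) zero_le_one, ENNReal.rpow_one]

lemma lintegral_Ioo_lintegral_Ioo_swap {F : ℝ → ℝ → ℝ≥0∞}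
    (hF : Measurable (Function.uncurry F)) {c : ℝ} (hc : 0 < c) :
    ∫⁻ v in Ioo 0 1, ∫⁻ t in Ioo 0 (v / c), F v t
      = ∫⁻ t in Ioo 0 (1 / c), ∫⁻ v in Ioo (c * t) 1, F v t := by
  set S : Set (ℝ × ℝ) := {x | 0 < x.2 ∧ c * x.2 < x.1 ∧ x.1 < 1}
  have hS : MeasurableSet S :=
    (measurableSet_lt measurable_const measurable_snd).inter
      ((measurableSet_lt (measurable_snd.const_mul c) measurable_fst).inter
        (measurableSet_lt measurable_fst measurable_const))
  have mem_fst : ∀ {v t}, (v, t) ∈ S ↔ v ∈ Ioo 0 1 ∧ t ∈ Ioo 0 (v / c) := by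
    intro v t
    rw [mem_Ioo, mem_Ioo, lt_div_iff₀ hc, mul_comm t]
    exact ⟨fun ⟨ht, htv, hv⟩ => ⟨⟨(mul_pos hc ht).trans htv, hv⟩, ht, htv⟩,
      fun ⟨⟨_, hv⟩, ht, htv⟩ => ⟨ht, htv, hv⟩⟩
  have mem_snd : ∀ {v t}, (v, t) ∈ S ↔ t ∈ Ioo 0 (1 / c) ∧ v ∈ Ioo (c * t) 1 := by
    intro v t
    rw [mem_Ioo, mem_Ioo, lt_div_iff₀ hc, mul_comm t]
    exact ⟨fun ⟨ht, htv, hv⟩ => ⟨⟨ht, by linarith⟩, htv, hv⟩,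
      fun ⟨⟨ht, _⟩, htv, hv⟩ => ⟨ht, htv, hv⟩⟩
  have slice_fst : ∀ v, (Ioo 0 1).indicator (fun v => ∫⁻ t in Ioo 0 (v / c), F v t) v
      = ∫⁻ t, S.indicator (Function.uncurry F) (v, t) := by
    intro v
    by_cases hv : v ∈ Ioo 0 1
    · rw [indicator_of_mem hv, ← lintegral_indicator measurableSet_Ioo]
      simp only [indicator_apply, mem_fst, hv, true_and, Function.uncurry_apply_pair]
    · simp only [indicator_apply, mem_fst, hv, false_and, if_false, lintegral_zero]
  have slice_snd : ∀ t, (Ioo 0 (1 / c)).indicator (fun t => ∫⁻ v in Ioo (c * t) 1, F v t) t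
      = ∫⁻ v, S.indicator (Function.uncurry F) (v, t) := by
    intro t
    by_cases ht : t ∈ Ioo 0 (1 / c)
    · rw [indicator_of_mem ht, ← lintegral_indicator measurableSet_Ioo]
      simp only [indicator_apply, mem_snd, ht, true_and, Function.uncurry_apply_pair]
    · simp only [indicator_apply, mem_snd, ht, false_and, if_false, lintegral_zero]
  rw [← lintegral_indicator measurableSet_Ioo, ← lintegral_indicator measurableSet_Ioo]
  simp_rw [slice_fst, slice_snd]
  exact lintegral_lintegral_swap (hF.indicator hS).aemeasurable

lemma ofReal_one_sub_log_rpow_le {β : ℝ} (hβ : 0 ≤ β) {v : ℝ} (hv : v ∈ Ioo 0 1) :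
    ENNReal.ofReal ((1 - Real.log v) ^ (1 - β)) ≤ ENNReal.ofReal (3 ^ β) *
      ∫⁻ t in Ioo 0 (v / Real.exp 1),
        ENNReal.ofReal ((1 - Real.log t) ^ (-β)) * ENNReal.ofReal t⁻¹ := by
  set M := 1 - Real.log v
  have hM : 1 < M := by linarith [Real.log_neg hv.1 hv.2]
  have hM0 : 0 < M := one_pos.trans hM
  set s := v / Real.exp 1
  have hs : 0 < s := div_pos hv.1 (Real.exp_pos 1)
  have hlog_s : Real.log s = -M := by
    rw [Real.log_div hv.1.ne' (Real.exp_pos 1).ne', Real.log_exp]; ring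
  set a := s * Real.exp (-M)
  have ha : 0 < a := mul_pos hs (Real.exp_pos _)
  have has : a ≤ s := mul_le_of_le_one_right hs.le (Real.exp_le_one_iff.2 (by linarith))
  have hlog_a : Real.log a = -2 * M := by
    rw [Real.log_mul hs.ne' (Real.exp_pos _).ne', Real.log_exp, hlog_s]; ring
  have hlog_sa : Real.log (s / a) = M := by
    rw [Real.log_div hs.ne' ha.ne', hlog_s, hlog_a]; ring
  have window : ∀ t ∈ Ioo a s, ENNReal.ofReal ((3 * M) ^ (-β)) * ENNReal.ofReal t⁻¹
      ≤ ENNReal.ofReal ((1 - Real.log t) ^ (-β)) * ENNReal.ofReal t⁻¹ := by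
    intro t ht
    have hlog_at : Real.log a < Real.log t := Real.log_lt_log ha ht.1
    have hlog_ts : Real.log t < Real.log s := Real.log_lt_log (ha.trans ht.1) ht.2
    gcongr ENNReal.ofReal ?_ * _
    exact Real.rpow_le_rpow_of_nonpos (by linarith) (by linarith) (neg_nonpos.2 hβ)
  have hconst : M ^ (1 - β) = 3 ^ β * ((3 * M) ^ (-β) * M) := by
    rw [Real.mul_rpow (by norm_num) hM0.le, Real.rpow_neg (by norm_num), Real.rpow_neg hM0.le,
      sub_eq_neg_add, Real.rpow_add hM0, Real.rpow_one, Real.rpow_neg hM0.le]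
    field_simp
  calc ENNReal.ofReal (M ^ (1 - β))
      = ENNReal.ofReal (3 ^ β) * (ENNReal.ofReal ((3 * M) ^ (-β)) * ENNReal.ofReal M) := by
        rw [hconst, ENNReal.ofReal_mul (by positivity), ENNReal.ofReal_mul (by positivity)]
    _ = ENNReal.ofReal (3 ^ β) *
          ∫⁻ t in Ioo a s, ENNReal.ofReal ((3 * M) ^ (-β)) * ENNReal.ofReal t⁻¹ := by
        rw [lintegral_const_mul' _ _ ENNReal.ofReal_ne_top, setLIntegral_Ioo_ofReal_inv ha has,
          hlog_sa]
    _ ≤ ENNReal.ofReal (3 ^ β) * ∫⁻ t in Ioo a s,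
          ENNReal.ofReal ((1 - Real.log t) ^ (-β)) * ENNReal.ofReal t⁻¹ := by
        gcongr ENNReal.ofReal (3 ^ β) * ?_
        exact setLIntegral_mono' measurableSet_Ioo window
    _ ≤ _ := by
        gcongr ENNReal.ofReal (3 ^ β) * ?_
        exact lintegral_mono_set (Ioo_subset_Ioo_left ha.le)

lemma rpow_mul_one_sub_log_rpow_eq {α b q : ℝ} (hq : 0 < q) (x : ℝ≥0∞) {v : ℝ}
    (hv : v ∈ Ioo 0 1) :
    (ENNReal.ofReal (v ^ α * (1 - Real.log v) ^ (-b + 1 / q)) * x) ^ q * ENNReal.ofReal v⁻¹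
      = (ENNReal.ofReal (v ^ α) * x) ^ q * ENNReal.ofReal v⁻¹ *
        ENNReal.ofReal ((1 - Real.log v) ^ (1 - b * q)) := by
  have hL : 0 < 1 - Real.log v := by linarith [Real.log_neg hv.1 hv.2]
  rw [ENNReal.ofReal_mul (Real.rpow_nonneg hv.1.le _), mul_right_comm _ _ x,
    ENNReal.mul_rpow_of_nonneg _ _ hq.le,
    ENNReal.ofReal_rpow_of_pos (Real.rpow_pos_of_pos hL _),
    ← Real.rpow_mul hL.le, show (-b + 1 / q) * q = 1 - b * q by field_simp; ring]
  ring

section AntitoneOn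

variable {φ : ℝ → ℝ≥0∞} {α p : ℝ}

lemma rpow_le_setLIntegral_of_antitoneOn (hφ : AntitoneOn φ (Ioo 0 1)) (hα : 0 ≤ α)
    (hp : 0 ≤ p) {v : ℝ} (hv : v ∈ Ioo 0 1) :
    (ENNReal.ofReal (v ^ α) * φ v) ^ p ≤ ENNReal.ofReal (Real.exp α) ^ p *
      ∫⁻ u in Ioo (v / Real.exp 1) v,
        (ENNReal.ofReal (u ^ α) * φ u) ^ p * ENNReal.ofReal u⁻¹ := by
  have hv' : 0 < v / Real.exp 1 := div_pos hv.1 (Real.exp_pos 1)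
  have hvv : v / Real.exp 1 ≤ v := div_le_self hv.1.le (Real.one_le_exp zero_le_one)
  have pointwise : ∀ u ∈ Ioo (v / Real.exp 1) v,
      (ENNReal.ofReal (v ^ α) * φ v) ^ p * ENNReal.ofReal u⁻¹
        ≤ ENNReal.ofReal (Real.exp α) ^ p *
          ((ENNReal.ofReal (u ^ α) * φ u) ^ p * ENNReal.ofReal u⁻¹) := by
    intro u hu
    have hu0 : 0 < u := hv'.trans hu.1
    have hv_le : v ^ α ≤ Real.exp α * u ^ α := by
      rw [← Real.exp_one_rpow, ← Real.mul_rpow (Real.exp_pos 1).le hu0.le]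
      exact Real.rpow_le_rpow hv.1.le ((div_lt_iff₀' (Real.exp_pos 1)).1 hu.1).le hα
    have hφ_le : φ v ≤ φ u := hφ ⟨hu0, hu.2.trans hv.2⟩ hv hu.2.le
    rw [← mul_assoc, ← ENNReal.mul_rpow_of_nonneg _ _ hp, ← mul_assoc,
      ← ENNReal.ofReal_mul (Real.exp_pos α).le]
    gcongr
  calc (ENNReal.ofReal (v ^ α) * φ v) ^ p
      = ∫⁻ u in Ioo (v / Real.exp 1) v,
          (ENNReal.ofReal (v ^ α) * φ v) ^ p * ENNReal.ofReal u⁻¹ := by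
        rw [lintegral_const_mul _ measurable_inv.ennreal_ofReal,
          setLIntegral_Ioo_ofReal_inv hv' hvv, div_div_cancel₀ hv.1.ne', Real.log_exp,
          ENNReal.ofReal_one, mul_one]
    _ ≤ _ := by
        rw [← lintegral_const_mul' _ _ (by finiteness)]
        exact setLIntegral_mono' measurableSet_Ioo pointwise

lemma setLIntegral_rpow_le_rpow_setLIntegral (hφm : Measurable φ)
    (hφ : AntitoneOn φ (Ioo 0 1)) (hα : 0 ≤ α) (hp : 0 < p) {q : ℝ} (hpq : p ≤ q) {t : ℝ}
    (ht : 0 ≤ t) :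
    ∫⁻ v in Ioo (Real.exp 1 * t) 1, (ENNReal.ofReal (v ^ α) * φ v) ^ q * ENNReal.ofReal v⁻¹
      ≤ ENNReal.ofReal (Real.exp α) ^ (q - p) *
        (∫⁻ u in Ioo t 1, (ENNReal.ofReal (u ^ α) * φ u) ^ p * ENNReal.ofReal u⁻¹) ^
          (q / p) := by
  set g : ℝ → ℝ≥0∞ := fun u => ENNReal.ofReal (u ^ α) * φ u
  set A := ∫⁻ u in Ioo t 1, g u ^ p * ENNReal.ofReal u⁻¹
  set K := ENNReal.ofReal (Real.exp α) ^ p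
  have hqp : 1 ≤ q / p := (one_le_div hp).2 hpq
  have ht_le : t ≤ Real.exp 1 * t := le_mul_of_one_le_left ht (Real.one_le_exp zero_le_one)
  have sup_le : ∀ v ∈ Ioo (Real.exp 1 * t) 1, g v ^ p ≤ K * A := by
    intro v hv
    have hv0 : v ∈ Ioo 0 1 := ⟨(mul_nonneg (Real.exp_pos 1).le ht).trans_lt hv.1, hv.2⟩
    refine (rpow_le_setLIntegral_of_antitoneOn hφ hα hp.le hv0).trans ?_
    gcongr
    refine lintegral_mono_set (Ioo_subset_Ioo ?_ hv.2.le)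
    exact (le_div_iff₀' (Real.exp_pos 1)).2 hv.1.le
  have pointwise : ∀ v ∈ Ioo (Real.exp 1 * t) 1,
      g v ^ q * ENNReal.ofReal v⁻¹
        ≤ (K * A) ^ (q / p - 1) * (g v ^ p * ENNReal.ofReal v⁻¹) := by
    intro v hv
    have hsplit : g v ^ q = (g v ^ p) ^ (q / p - 1) * g v ^ p := by
      rw [ENNReal.rpow_sub_one_mul_self _ hqp, ← ENNReal.rpow_mul, mul_div_cancel₀ _ hp.ne']
    rw [hsplit, mul_assoc]
    gcongr
    exact sup_le v hv
  have hg : Measurable fun u => g u ^ p * ENNReal.ofReal u⁻¹ :=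
    (((measurable_id.pow_const α).ennreal_ofReal.mul hφm).pow_const p).mul
      measurable_inv.ennreal_ofReal
  calc ∫⁻ v in Ioo (Real.exp 1 * t) 1, g v ^ q * ENNReal.ofReal v⁻¹
      ≤ ∫⁻ v in Ioo (Real.exp 1 * t) 1,
          (K * A) ^ (q / p - 1) * (g v ^ p * ENNReal.ofReal v⁻¹) :=
        setLIntegral_mono' measurableSet_Ioo pointwise
    _ = (K * A) ^ (q / p - 1) *
          ∫⁻ v in Ioo (Real.exp 1 * t) 1, g v ^ p * ENNReal.ofReal v⁻¹ :=
        lintegral_const_mul _ hg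
    _ ≤ (K * A) ^ (q / p - 1) * A := by
        gcongr
        exact lintegral_mono_set (Ioo_subset_Ioo_left ht_le)
    _ = ENNReal.ofReal (Real.exp α) ^ (q - p) * A ^ (q / p) := by
        rw [ENNReal.mul_rpow_of_nonneg _ _ (sub_nonneg.2 hqp), ← ENNReal.rpow_mul, mul_sub,
          mul_div_cancel₀ _ hp.ne', mul_one, mul_assoc, ENNReal.rpow_sub_one_mul_self _ hqp]

lemma lintegral_lorentzZygmund_le_grand (hφm : Measurable φ)
    (hφ : AntitoneOn φ (Ioo 0 1)) (hα : 0 ≤ α) (hp : 0 < p) {q b : ℝ} (hpq : p ≤ q)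
    (hb : 0 ≤ b) :
    ∫⁻ t in Ioo 0 1,
        (ENNReal.ofReal (t ^ α * (1 - Real.log t) ^ (-b + 1 / q)) * φ t) ^ q *
          ENNReal.ofReal t⁻¹
      ≤ ENNReal.ofReal (3 ^ (b * q)) * ENNReal.ofReal (Real.exp α) ^ (q - p) *
        ∫⁻ t in Ioo 0 1, ENNReal.ofReal ((1 - Real.log t) ^ (-(b * q))) *
          (∫⁻ u in Ioo t 1, (ENNReal.ofReal (u ^ α) * φ u) ^ p * ENNReal.ofReal u⁻¹) ^
            (q / p) *
          ENNReal.ofReal t⁻¹ := by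
  have hq : 0 < q := hp.trans_le hpq
  set G : ℝ → ℝ≥0∞ := fun v =>
    (ENNReal.ofReal (v ^ α) * φ v) ^ q * ENNReal.ofReal v⁻¹
  set W : ℝ → ℝ≥0∞ := fun t =>
    ENNReal.ofReal ((1 - Real.log t) ^ (-(b * q))) * ENNReal.ofReal t⁻¹
  set A : ℝ → ℝ≥0∞ := fun t =>
    ∫⁻ u in Ioo t 1, (ENNReal.ofReal (u ^ α) * φ u) ^ p * ENNReal.ofReal u⁻¹
  set c₁ := ENNReal.ofReal (3 ^ (b * q))
  set c₂ := ENNReal.ofReal (Real.exp α) ^ (q - p)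
  have hG : Measurable G :=
    (((measurable_id.pow_const α).ennreal_ofReal.mul hφm).pow_const q).mul
      measurable_inv.ennreal_ofReal
  have hW : Measurable W :=
    ((measurable_const.sub Real.measurable_log).pow_const _).ennreal_ofReal.mul
      measurable_inv.ennreal_ofReal
  calc ∫⁻ v in Ioo 0 1,
        (ENNReal.ofReal (v ^ α * (1 - Real.log v) ^ (-b + 1 / q)) * φ v) ^ q *
          ENNReal.ofReal v⁻¹
      = ∫⁻ v in Ioo 0 1, G v * ENNReal.ofReal ((1 - Real.log v) ^ (1 - b * q)) :=
        setLIntegral_congr_fun measurableSet_Ioo fun v hv =>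
          rpow_mul_one_sub_log_rpow_eq hq _ hv
    _ ≤ ∫⁻ v in Ioo 0 1, ∫⁻ t in Ioo 0 (v / Real.exp 1), c₁ * (G v * W t) := by
        refine setLIntegral_mono' measurableSet_Ioo fun v hv => ?_
        rw [lintegral_const_mul _ (hW.const_mul _), lintegral_const_mul _ hW, mul_left_comm]
        gcongr
        exact ofReal_one_sub_log_rpow_le (mul_nonneg hb hq.le) hv
    _ = ∫⁻ t in Ioo 0 (1 / Real.exp 1),
          ∫⁻ v in Ioo (Real.exp 1 * t) 1, c₁ * (G v * W t) :=
        lintegral_Ioo_lintegral_Ioo_swap (F := fun v t => c₁ * (G v * W t))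
          (((hG.comp measurable_fst).mul (hW.comp measurable_snd)).const_mul c₁)
          (Real.exp_pos 1)
    _ ≤ ∫⁻ t in Ioo 0 (1 / Real.exp 1), c₁ * c₂ *
          (ENNReal.ofReal ((1 - Real.log t) ^ (-(b * q))) * A t ^ (q / p) *
            ENNReal.ofReal t⁻¹) := by
        refine setLIntegral_mono' measurableSet_Ioo fun t ht => ?_
        rw [lintegral_const_mul _ (hG.mul_const _), lintegral_mul_const _ hG]
        calc c₁ * ((∫⁻ v in Ioo (Real.exp 1 * t) 1, G v) * W t)
            ≤ c₁ * (c₂ * A t ^ (q / p) * W t) := by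
              gcongr
              exact setLIntegral_rpow_le_rpow_setLIntegral hφm hφ hα hp hpq ht.1.le
          _ = _ := by simp only [W]; ring
    _ ≤ ∫⁻ t in Ioo 0 1, c₁ * c₂ *
          (ENNReal.ofReal ((1 - Real.log t) ^ (-(b * q))) * A t ^ (q / p) *
            ENNReal.ofReal t⁻¹) :=
        lintegral_mono_set <| Ioo_subset_Ioo_right <|
          div_le_self zero_le_one (Real.one_le_exp zero_le_one)
    _ = _ := lintegral_const_mul' _ _ (by finiteness)

end AntitoneOn

/-- for `1 < r < ∞`, `0 < p ≤ q`, `b > 1/q` and any (non-increasing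
rearrangement `f* = φ` of a) measurable function on `(0,1)`,
`‖f‖_{L_{r,q}(log L)_{−b+1/q}} ≲ ‖f‖_{L^{(R)}_{r,q,−b,p}}`, i.e.
`(∫₀¹ (t^{1/r}(1−log t)^{−b+1/q} f*(t))^q dt/t)^{1/q}
  ≲ (∫₀¹ (1−log t)^{−bq}(∫_t¹(u^{1/r}f*(u))^p du/u)^{q/p} dt/t)^{1/q}`. -/
theorem lorentz_zygmund_dominated_by_grand (r p q b : ℝ)
    (hr : 1 < r) (hp : 0 < p) (hpq : p ≤ q) (hb : 1/q < b) :
    ∃ C : ℝ≥0∞, C ≠ ⊤ ∧ ∀ φ : ℝ → ℝ≥0∞,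
      Measurable φ → AntitoneOn φ (Set.Ioo 0 1) →
      (∫⁻ t in Set.Ioo (0:ℝ) 1,
          (ENNReal.ofReal (t ^ (1/r) * (1 - Real.log t) ^ (-b + 1/q)) * φ t) ^ q
            * ENNReal.ofReal (t⁻¹)) ^ (1/q)
      ≤ C * (∫⁻ t in Set.Ioo (0:ℝ) 1,
          ENNReal.ofReal ((1 - Real.log t) ^ (-(b*q))) *
            (∫⁻ u in Set.Ioo t 1,
              (ENNReal.ofReal (u ^ (1/r)) * φ u) ^ p * ENNReal.ofReal (u⁻¹)) ^ (q/p) *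
            ENNReal.ofReal (t⁻¹)) ^ (1/q) := by
  have hq : 0 < q := hp.trans_le hpq
  have hb0 : 0 ≤ b := ((one_div_pos.2 hq).trans hb).le
  have hα : 0 ≤ 1 / r := (one_div_pos.2 (zero_lt_one.trans hr)).le
  refine ⟨(ENNReal.ofReal (3 ^ (b * q)) * ENNReal.ofReal (Real.exp (1 / r)) ^ (q - p)) ^ (1 / q),
    ENNReal.rpow_ne_top_of_nonneg (one_div_pos.2 hq).le (by finiteness), fun φ hφm hφ => ?_⟩
  rw [← ENNReal.mul_rpow_of_nonneg _ _ (one_div_pos.2 hq).le]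
  exact ENNReal.rpow_le_rpow (lintegral_lorentzZygmund_le_grand hφm hφ hα hp hpq hb0)
    (one_div_pos.2 hq).le
end

section
/- Let 1 < r < ∞, 0 < q < p < ∞, b > 1/q. Then for any measurable f on (0,1) with non-increasing rearrangement f*, one has ‖f‖_{L_{r,p}(log L)_{−b+1/q}} ≤ ‖f‖_{L^{(R)}_{r,q,−b,p}}, i.e., (∫₀¹ t^{p/r} f*(t)^p (∫₀^t (1−log u)^{−bq} du/u)^{p/q} dt/t)^{1/p} ≤ (∫₀¹ (1−log u)^{−bq}(∫_u¹ (t^{1/r} f*(t))^p dt/t)^{q/p} du/u)^{1/q}, up to the equivalence ∫₀^t(1−log u)^{−bq}du/u ≍ (1−log t)^{−bq+1}. -/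
/-!
With `s = p / q > 1`, `F t = (t ^ (1/r) f*(t)) ^ p / t` and `G u = (1 - log u) ^ (-b q) / u`, the
inequality, raised to the power `q`, is Minkowski's integral inequality
`‖∫ K(·, u) du‖_{L^s} ≤ ∫ ‖K(·, u)‖_{L^s} du` for the kernel
`K(t, u) = F(t) ^ (1/s) G(u) 1_{u < t}`.
Minkowski's inequality follows from Hölder's inequality: for `H x = ∫ K(x, y) dy`, write
`∫ H ^ s = ∫∫ H(x) ^ (s - 1) K(x, y) dy dx`, exchange the integrals and apply Hölder in `x` to get
`‖H‖_s ^ s ≤ (∫ ‖K(·, y)‖_s dy) ‖H‖_s ^ (s - 1)`. To divide by `‖H‖_s ^ (s - 1)`, `H` is first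
replaced by truncations that are bounded and supported on sets of finite measure.
-/

open MeasureTheory Set
open scoped ENNReal

theorem ENNReal.iSup_rpow_s15 {ι : Sort*} {t : ℝ} (ht : 0 < t) (g : ι → ℝ≥0∞) :
    (⨆ i, g i) ^ t = ⨆ i, g i ^ t :=
  Monotone.map_iSup_of_continuousAt ENNReal.continuous_rpow_const.continuousAt
    (ENNReal.monotone_rpow_of_nonneg ht.le) (ENNReal.zero_rpow_of_pos ht)

theorem ENNReal.rpow_one_div_le_of_le_mul_rpow {p q : ℝ} (hpq : p.HolderConjugate q)
    {x y : ℝ≥0∞} (hx : x ≠ ∞) (h : x ≤ y * x ^ (1 / q)) : x ^ (1 / p) ≤ y := by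
  rcases eq_or_ne x 0 with rfl | hx0
  · rw [ENNReal.zero_rpow_of_pos (one_div_pos.mpr hpq.pos)]
    exact zero_le
  have hsplit : x = x ^ (1 / p) * x ^ (1 / q) := by
    rw [← ENNReal.rpow_add_of_nonneg _ _ (one_div_nonneg.mpr hpq.nonneg)
      (one_div_nonneg.mpr hpq.symm.nonneg), hpq.one_div_add_one_div, div_one, ENNReal.rpow_one]
  nth_rewrite 1 [hsplit] at h
  exact (ENNReal.mul_le_mul_iff_left (by simp [hx0, hx])
    (ENNReal.rpow_ne_top_of_nonneg (one_div_nonneg.mpr hpq.symm.nonneg) hx)).mp h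

section Minkowski

variable {α β : Type*} [MeasurableSpace α] [MeasurableSpace β] {μ : Measure α} {ν : Measure β}

theorem exists_monotone_iSup_eq_lintegral_rpow_ne_top [SigmaFinite μ] {H : α → ℝ≥0∞}
    (hH : Measurable H) {s : ℝ} (hs : 0 < s) :
    ∃ h : ℕ → α → ℝ≥0∞, (∀ n, Measurable (h n)) ∧ Monotone h ∧ (∀ x, ⨆ n, h n x = H x) ∧
      ∀ n, ∫⁻ x, h n x ^ s ∂μ ≠ ∞ := by
  refine ⟨fun n => (spanningSets μ n).indicator fun x => min (H x) n, fun n =>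
    (hH.min measurable_const).indicator (measurableSet_spanningSets μ n), ?_, ?_, ?_⟩
  · intro n m hnm x
    refine indicator_apply_le' (fun hx => ?_) fun _ => zero_le
    dsimp only
    rw [indicator_of_mem (monotone_spanningSets μ hnm hx)]
    exact min_le_min le_rfl (Nat.cast_le.mpr hnm)
  · intro x
    refine le_antisymm (iSup_le fun n => indicator_apply_le' (fun _ => min_le_left _ _)
      fun _ => zero_le) ?_
    rw [← inf_top_eq (H x), ← ENNReal.iSup_natCast, inf_iSup_eq]
    refine iSup_le fun m => le_iSup_of_le (max (spanningSetsIndex μ x) m) ?_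
    dsimp only
    rw [indicator_of_mem
      (monotone_spanningSets μ (le_max_left _ m) (mem_spanningSetsIndex μ x))]
    exact min_le_min le_rfl (Nat.cast_le.mpr (le_max_right _ m))
  · intro n
    refine ne_top_of_le_ne_top ?_ (lintegral_mono fun x => show _ ≤
      (spanningSets μ n).indicator (fun _ => (n : ℝ≥0∞) ^ s) x from ?_)
    · rw [lintegral_indicator_const (measurableSet_spanningSets μ n)]
      exact ENNReal.mul_ne_top (ENNReal.rpow_ne_top_of_nonneg hs.le (ENNReal.natCast_ne_top n))
        (measure_spanningSets_lt_top μ n).ne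
    · by_cases hx : x ∈ spanningSets μ n
      · simp only [indicator_of_mem hx]
        exact ENNReal.rpow_le_rpow (min_le_right _ _) hs.le
      · simp [indicator_of_notMem hx, ENNReal.zero_rpow_of_pos hs]

variable {K : α → β → ℝ≥0∞} {s : ℝ}

theorem rpow_lintegral_rpow_le_of_le_lintegral [SFinite μ] [SFinite ν] (hs : 1 < s)
    (hK : Measurable (Function.uncurry K)) {h : α → ℝ≥0∞} (hh : Measurable h)
    (hhK : ∀ x, h x ≤ ∫⁻ y, K x y ∂ν) (hfin : ∫⁻ x, h x ^ s ∂μ ≠ ∞) :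
    (∫⁻ x, h x ^ s ∂μ) ^ (1 / s) ≤ ∫⁻ y, (∫⁻ x, K x y ^ s ∂μ) ^ (1 / s) ∂ν := by
  have hconj := Real.HolderConjugate.conjExponent hs
  set s' := s.conjExponent
  refine ENNReal.rpow_one_div_le_of_le_mul_rpow hconj hfin ?_
  have hs1 : 0 ≤ s - 1 := by linarith
  calc ∫⁻ x, h x ^ s ∂μ = ∫⁻ x, h x ^ (s - 1) * h x ∂μ := by
        refine lintegral_congr fun x => ?_
        have := ENNReal.rpow_add_of_nonneg (x := h x) _ _ hs1 zero_le_one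
        rwa [sub_add_cancel, ENNReal.rpow_one] at this
    _ ≤ ∫⁻ x, ∫⁻ y, h x ^ (s - 1) * K x y ∂ν ∂μ := by
        refine lintegral_mono fun x => ?_
        rw [lintegral_const_mul _ hK.of_uncurry_left]
        exact mul_le_mul_right (hhK x) _
    _ = ∫⁻ y, ∫⁻ x, K x y * h x ^ (s - 1) ∂μ ∂ν := by
        rw [lintegral_lintegral_swap
          (((hh.pow_const _).comp measurable_fst).mul hK).aemeasurable]
        simp only [mul_comm]
    _ ≤ ∫⁻ y, (∫⁻ x, K x y ^ s ∂μ) ^ (1 / s) * (∫⁻ x, h x ^ s ∂μ) ^ (1 / s') ∂ν := by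
        refine lintegral_mono fun y => ?_
        have hpow : ∀ x, (h x ^ (s - 1)) ^ s' = h x ^ s := fun x => by
          rw [← ENNReal.rpow_mul, hconj.sub_one_mul_conj]
        simpa only [Pi.mul_apply, hpow] using ENNReal.lintegral_mul_le_Lp_mul_Lq μ hconj
          (f := fun x => K x y) (g := fun x => h x ^ (s - 1)) hK.of_uncurry_right.aemeasurable
          (hh.pow_const _).aemeasurable
    _ = (∫⁻ y, (∫⁻ x, K x y ^ s ∂μ) ^ (1 / s) ∂ν) * (∫⁻ x, h x ^ s ∂μ) ^ (1 / s') :=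
        lintegral_mul_const' _ _
          (ENNReal.rpow_ne_top_of_nonneg (one_div_nonneg.mpr hconj.symm.nonneg) hfin)

theorem rpow_lintegral_rpow_lintegral_le [SigmaFinite μ] [SFinite ν] (hs : 1 < s)
    (hK : Measurable (Function.uncurry K)) :
    (∫⁻ x, (∫⁻ y, K x y ∂ν) ^ s ∂μ) ^ (1 / s) ≤ ∫⁻ y, (∫⁻ x, K x y ^ s ∂μ) ^ (1 / s) ∂ν := by
  have hs0 : 0 < s := by linarith
  obtain ⟨h, h_meas, h_mono, h_sup, h_fin⟩ :=
    exists_monotone_iSup_eq_lintegral_rpow_ne_top (μ := μ) (hK.lintegral_prod_right' (ν := ν))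
      hs0
  calc (∫⁻ x, (∫⁻ y, K x y ∂ν) ^ s ∂μ) ^ (1 / s)
      = (∫⁻ x, ⨆ n, h n x ^ s ∂μ) ^ (1 / s) := by
        simp_rw [← ENNReal.iSup_rpow_s15 hs0, h_sup]
        rfl
    _ = (⨆ n, ∫⁻ x, h n x ^ s ∂μ) ^ (1 / s) := by
        rw [lintegral_iSup (fun n => (h_meas n).pow_const s)
          fun n m hnm x => ENNReal.rpow_le_rpow (h_mono hnm x) hs0.le]
    _ ≤ ∫⁻ y, (∫⁻ x, K x y ^ s ∂μ) ^ (1 / s) ∂ν := by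
        rw [ENNReal.iSup_rpow_s15 (one_div_pos.mpr hs0)]
        exact iSup_le fun n => rpow_lintegral_rpow_le_of_le_lintegral hs hK (h_meas n)
          (fun x => h_sup x ▸ le_iSup (h · x) n) (h_fin n)

end Minkowski

theorem rpow_setLIntegral_mul_rpow_setLIntegral_Ioo_le {μ : Measure ℝ} [SigmaFinite μ]
    {a b s : ℝ} (hs : 1 < s) {F G : ℝ → ℝ≥0∞} (hF : Measurable F) (hG : Measurable G) :
    (∫⁻ t in Ioo a b, F t * (∫⁻ u in Ioo a t, G u ∂μ) ^ s ∂μ) ^ (1 / s)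
      ≤ ∫⁻ u in Ioo a b, G u * (∫⁻ t in Ioo u b, F t ∂μ) ^ (1 / s) ∂μ := by
  have hs0 : 0 < s := by linarith
  have hinv : s * (1 / s) = 1 := mul_one_div_cancel hs0.ne'
  set K : ℝ → ℝ → ℝ≥0∞ := fun t u => if u < t then F t ^ (1 / s) * G u else 0
  have hK : Measurable (Function.uncurry K) :=
    Measurable.ite (measurableSet_lt measurable_snd measurable_fst)
      (((hF.pow_const _).comp measurable_fst).mul (hG.comp measurable_snd)) measurable_const
  have hleft : EqOn (fun t => (∫⁻ u in Ioo a b, K t u ∂μ) ^ s)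
      (fun t => F t * (∫⁻ u in Ioo a t, G u ∂μ) ^ s) (Ioo a b) := by
    intro t ht
    have hKt : (fun u => K t u) = (Iio t).indicator fun u => F t ^ (1 / s) * G u := by
      ext u; simp [K, indicator_apply]
    simp only [hKt]
    rw [setLIntegral_indicator measurableSet_Iio, inter_comm, Ioo_inter_Iio, min_eq_right ht.2.le,
      lintegral_const_mul _ hG, ENNReal.mul_rpow_of_nonneg _ _ hs0.le, ← ENNReal.rpow_mul,
      one_div_mul_cancel hs0.ne', ENNReal.rpow_one]
  have hright : EqOn (fun u => (∫⁻ t in Ioo a b, K t u ^ s ∂μ) ^ (1 / s))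
      (fun u => G u * (∫⁻ t in Ioo u b, F t ∂μ) ^ (1 / s)) (Ioo a b) := by
    intro u hu
    have hKu : (fun t => K t u ^ s) = (Ioi u).indicator fun t => F t * G u ^ s := by
      ext t
      by_cases htu : u < t
      · simp [K, htu, ENNReal.mul_rpow_of_nonneg _ _ hs0.le, ← ENNReal.rpow_mul,
          inv_mul_cancel₀ hs0.ne']
      · simp [K, htu, ENNReal.zero_rpow_of_pos hs0]
    have hset : Ioi u ∩ Ioo a b = Ioo u b := by
      ext t; simp only [mem_inter_iff, mem_Ioi, mem_Ioo]
      constructor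
      · rintro ⟨hut, -, htb⟩; exact ⟨hut, htb⟩
      · rintro ⟨hut, htb⟩; exact ⟨hut, hu.1.trans hut, htb⟩
    simp only [hKu]
    rw [setLIntegral_indicator measurableSet_Ioi, hset, lintegral_mul_const _ hF,
      ENNReal.mul_rpow_of_nonneg _ _ (one_div_nonneg.mpr hs0.le), ← ENNReal.rpow_mul, hinv,
      ENNReal.rpow_one, mul_comm]
  calc (∫⁻ t in Ioo a b, F t * (∫⁻ u in Ioo a t, G u ∂μ) ^ s ∂μ) ^ (1 / s)
      = (∫⁻ t in Ioo a b, (∫⁻ u in Ioo a b, K t u ∂μ) ^ s ∂μ) ^ (1 / s) := by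
        rw [setLIntegral_congr_fun measurableSet_Ioo hleft]
    _ ≤ ∫⁻ u in Ioo a b, (∫⁻ t in Ioo a b, K t u ^ s ∂μ) ^ (1 / s) ∂μ :=
        rpow_lintegral_rpow_lintegral_le hs hK
    _ = ∫⁻ u in Ioo a b, G u * (∫⁻ t in Ioo u b, F t ∂μ) ^ (1 / s) ∂μ :=
        setLIntegral_congr_fun measurableSet_Ioo hright

theorem lorentz_minkowski_inequality_general (r p q b : ℝ)
    (hq : 0 < q) (hqp : q < p) :
    ∀ φ : ℝ → ℝ≥0∞, Measurable φ → AntitoneOn φ (Set.Ioo 0 1) →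
      (∫⁻ t in Set.Ioo (0:ℝ) 1,
          ENNReal.ofReal (t ^ (p/r)) * (φ t) ^ p *
            (∫⁻ u in Set.Ioo (0:ℝ) t,
              ENNReal.ofReal ((1 - Real.log u) ^ (-(b*q))) * ENNReal.ofReal (u⁻¹)) ^ (p/q) *
            ENNReal.ofReal (t⁻¹)) ^ (1/p)
      ≤ (∫⁻ u in Set.Ioo (0:ℝ) 1,
          ENNReal.ofReal ((1 - Real.log u) ^ (-(b*q))) *
            (∫⁻ t in Set.Ioo u 1,
              (ENNReal.ofReal (t ^ (1/r)) * φ t) ^ p * ENNReal.ofReal (t⁻¹)) ^ (q/p) *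
            ENNReal.ofReal (u⁻¹)) ^ (1/q) := by
  intro φ hφ _
  have hp : 0 < p := hq.trans hqp
  set F : ℝ → ℝ≥0∞ := fun t => (ENNReal.ofReal (t ^ (1 / r)) * φ t) ^ p * ENNReal.ofReal t⁻¹
  set G : ℝ → ℝ≥0∞ := fun u =>
    ENNReal.ofReal ((1 - Real.log u) ^ (-(b * q))) * ENNReal.ofReal u⁻¹
  have hmink := rpow_setLIntegral_mul_rpow_setLIntegral_Ioo_le (μ := volume) (a := 0) (b := 1)
    ((one_lt_div hq).mpr hqp) (F := F) (G := G) (by fun_prop) (by fun_prop)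
  rw [one_div_div] at hmink
  calc _ = (∫⁻ t in Ioo 0 1, F t * (∫⁻ u in Ioo 0 t, G u) ^ (p / q)) ^ (q / p * (1 / q)) := by
        rw [div_mul_div_comm, mul_one, mul_comm, ← div_div, div_self hq.ne']
        refine congrArg (· ^ _) (setLIntegral_congr_fun measurableSet_Ioo fun t ht => ?_)
        simp only [F]
        rw [ENNReal.mul_rpow_of_nonneg _ _ hp.le,
          ENNReal.ofReal_rpow_of_nonneg (Real.rpow_nonneg ht.1.le _) hp.le, ← Real.rpow_mul ht.1.le,
          one_div_mul_eq_div]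
        ring
    _ ≤ (∫⁻ u in Ioo 0 1, G u * (∫⁻ t in Ioo u 1, F t) ^ (q / p)) ^ (1 / q) := by
        rw [ENNReal.rpow_mul]
        gcongr
    _ = _ := congrArg (· ^ _) (lintegral_congr fun u => mul_right_comm _ _ _)

/-- for `1 < r < ∞`, `0 < q < p < ∞`, `b > 1/q` and any (non-increasing
rearrangement `f* = φ` of a) measurable function on `(0,1)`, Minkowski's integral
inequality gives
`(∫₀¹ t^{p/r} f*(t)^p (∫₀^t (1−log u)^{−bq} du/u)^{p/q} dt/t)^{1/p}
  ≤ (∫₀¹ (1−log u)^{−bq}(∫_u¹ (t^{1/r} f*(t))^p dt/t)^{q/p} du/u)^{1/q}`. -/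
theorem lorentz_minkowski_inequality (r p q b : ℝ)
    (hr : 1 < r) (hq : 0 < q) (hqp : q < p) (hb : 1/q < b) :
    ∀ φ : ℝ → ℝ≥0∞, Measurable φ → AntitoneOn φ (Set.Ioo 0 1) →
      (∫⁻ t in Set.Ioo (0:ℝ) 1,
          ENNReal.ofReal (t ^ (p/r)) * (φ t) ^ p *
            (∫⁻ u in Set.Ioo (0:ℝ) t,
              ENNReal.ofReal ((1 - Real.log u) ^ (-(b*q))) * ENNReal.ofReal (u⁻¹)) ^ (p/q) *
            ENNReal.ofReal (t⁻¹)) ^ (1/p)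
      ≤ (∫⁻ u in Set.Ioo (0:ℝ) 1,
          ENNReal.ofReal ((1 - Real.log u) ^ (-(b*q))) *
            (∫⁻ t in Set.Ioo u 1,
              (ENNReal.ofReal (t ^ (1/r)) * φ t) ^ p * ENNReal.ofReal (t⁻¹)) ^ (q/p) *
            ENNReal.ofReal (u⁻¹)) ^ (1/q) :=
  lorentz_minkowski_inequality_general r p q b hq hqp
end
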